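/- arXiv:1405.5446 — 7 statements merged into one kernel-verified Lean document; each statement's English description precedes it below -/
import Mathlib

section
/- Let κ > 0, α > 0 and δ < 0. For ε > 0 let ℓ_ε = ∫_δ^0 ds/(κ|s|^{1+α} + ε). Then lim_{ε→0⁺} ε^{α/(α+1)} · ℓ_ε = κ^{−1/(α+1)} · (π/(α+1))/sin(π/(α+1)). Equivalently, ℓ_ε ∼ ε^{−α/(α+1)} κ^{−1/(α+1)} (π/(α+1))/sin(π/(α+1)) as ε → 0⁺. -/
/-!
With `p = α + 1` and `c = (ε / κ) ^ (1 / p)`, the substitution `s = -c u` turns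
`ε ^ (α / p) * ℓ ε` into `κ ^ (-1 / p) * ∫ u in 0..|δ| / c, 1 / (1 + u ^ p)`, and `|δ| / c → ∞`
as `ε → 0⁺`. The limit `∫₀^∞ du / (1 + u ^ p)` becomes, after `u ^ p = y` and `y = t / (1 - t)`,
`(1 / p) B(1 / p, 1 - 1 / p)`, which is `(π / p) / sin (π / p)` by Euler's reflection formula.
-/

open Set MeasureTheory Real Filter

theorem Complex.betaIntegral_ofReal (a b : ℝ) :
    Complex.betaIntegral a b = ↑(∫ t in (0:ℝ)..1, t ^ (a - 1) * (1 - t) ^ (b - 1)) := by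
  rw [Complex.betaIntegral, ← intervalIntegral.integral_ofReal]
  refine intervalIntegral.integral_congr fun t ht => ?_
  rw [uIcc_of_le zero_le_one] at ht
  simp only [Complex.ofReal_mul, Complex.ofReal_cpow ht.1, Complex.ofReal_cpow (sub_nonneg.2 ht.2)]
  norm_cast

theorem integral_rpow_mul_one_sub_rpow_neg {a : ℝ} (ha₀ : 0 < a) (ha₁ : a < 1) :
    ∫ t in (0:ℝ)..1, t ^ (a - 1) * (1 - t) ^ (-a) = π / sin (π * a) := by
  have h := ProbabilityTheory.beta_eq_betaIntegralReal a (1 - a) ha₀ (sub_pos.2 ha₁)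
  rw [ProbabilityTheory.beta, add_sub_cancel, Real.Gamma_one, div_one, Real.Gamma_mul_Gamma_one_sub,
    Complex.betaIntegral_ofReal, Complex.ofReal_re, sub_sub_cancel_left] at h
  exact h.symm

theorem integral_Ioi_rpow_mul_one_add_rpow (a b : ℝ) :
    ∫ y in Ioi (0:ℝ), y ^ (a - 1) * (1 + y) ^ (-(a + b))
      = ∫ t in (0:ℝ)..1, t ^ (a - 1) * (1 - t) ^ (b - 1) := by
  have hderiv : ∀ t ∈ Ioo (0:ℝ) 1,
      HasDerivWithinAt (fun t => t / (1 - t)) ((1 - t) ^ 2)⁻¹ (Ioo 0 1) t := by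
    intro t ht
    have h := (hasDerivAt_id t).div ((hasDerivAt_id t).const_sub 1) (sub_pos.2 ht.2).ne'
    refine (h.congr_deriv ?_).hasDerivWithinAt
    simp only [id]
    ring
  have hinj : InjOn (fun t : ℝ => t / (1 - t)) (Ioo 0 1) := by
    intro x hx y hy hxy
    rw [div_eq_div_iff (sub_pos.2 hx.2).ne' (sub_pos.2 hy.2).ne'] at hxy
    linarith
  have himage : (fun t : ℝ => t / (1 - t)) '' Ioo 0 1 = Ioi 0 := by
    refine Subset.antisymm ?_ fun y (hy : 0 < y) => ⟨y / (1 + y), ?_, ?_⟩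
    · rintro _ ⟨t, ht, rfl⟩
      exact div_pos ht.1 (sub_pos.2 ht.2)
    · exact ⟨by positivity, (div_lt_one (by positivity)).2 (by linarith)⟩
    · field_simp
      ring
  rw [← himage, integral_image_eq_integral_abs_deriv_smul measurableSet_Ioo hderiv hinj,
    intervalIntegral.integral_of_le zero_le_one, integral_Ioc_eq_integral_Ioo]
  refine setIntegral_congr_fun measurableSet_Ioo fun t ht => ?_
  have h1t : 0 < 1 - t := sub_pos.2 ht.2
  have hsum : 1 + t / (1 - t) = (1 - t)⁻¹ := by
    field_simp
    ring
  have hexp : (1 - t) ^ (b - 1) * (1 - t) ^ (a - 1) * (1 - t) ^ (2:ℝ) = (1 - t) ^ (a + b) := by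
    rw [← rpow_add h1t, ← rpow_add h1t]
    ring_nf
  simp only [smul_eq_mul, hsum, inv_rpow h1t.le, rpow_neg h1t.le, inv_inv,
    div_rpow ht.1.le h1t.le, abs_of_pos (inv_pos.2 (pow_pos h1t 2)), ← hexp, rpow_two]
  have : (0:ℝ) < (1 - t) ^ (a - 1) := rpow_pos_of_pos h1t _
  field_simp

theorem integral_Ioi_one_div_one_add_rpow {p : ℝ} (hp : 1 < p) :
    ∫ u in Ioi (0:ℝ), 1 / (1 + u ^ p) = π / p / sin (π / p) := by
  have hp₀ : 0 < p := one_pos.trans hp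
  have ha₁ : 1 / p < 1 := (div_lt_one hp₀).2 hp
  rw [← integral_comp_rpow_Ioi_of_pos (one_div_pos.2 hp₀)]
  have hsubst : ∀ x ∈ Ioi (0:ℝ), (1 / p * x ^ (1 / p - 1)) • (1 / (1 + (x ^ (1 / p)) ^ p))
      = 1 / p * (x ^ (1 / p - 1) * (1 + x) ^ (-(1 / p + (1 - 1 / p)))) := by
    intro x (hx : 0 < x)
    rw [← rpow_mul hx.le, one_div_mul_cancel hp₀.ne', rpow_one, add_sub_cancel, rpow_neg_one,
      smul_eq_mul, mul_assoc, one_div (1 + x)]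
  rw [setIntegral_congr_fun measurableSet_Ioi hsubst, integral_const_mul,
    integral_Ioi_rpow_mul_one_add_rpow, sub_sub_cancel_left,
    integral_rpow_mul_one_sub_rpow_neg (by positivity) ha₁, mul_one_div]
  ring

theorem integrableOn_Ioi_one_div_one_add_rpow {p : ℝ} (hp : 1 < p) :
    IntegrableOn (fun u : ℝ => 1 / (1 + u ^ p)) (Ioi 0) := by
  have hp₀ : 0 < p := one_pos.trans hp
  -- a non-integrable function would have Bochner integral `0`
  refine Integrable.of_integral_ne_zero ?_
  rw [integral_Ioi_one_div_one_add_rpow hp]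
  have : 0 < sin (π / p) := sin_pos_of_pos_of_lt_pi (by positivity) (div_lt_self pi_pos hp)
  positivity

theorem integral_one_div_mul_rpow_add {κ ε c L p : ℝ} (hc : 0 < c) (hcε : κ * c ^ p = ε)
    (hL : 0 ≤ L) :
    ∫ x in (0:ℝ)..L, 1 / (κ * x ^ p + ε) = c / ε * ∫ u in (0:ℝ)..L / c, 1 / (1 + u ^ p) := by
  rw [← intervalIntegral.integral_const_mul]
  have h := intervalIntegral.smul_integral_comp_mul_left (fun x => 1 / (κ * x ^ p + ε)) c
    (a := 0) (b := L / c)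
  rw [mul_zero, mul_div_cancel₀ L hc.ne', smul_eq_mul] at h
  rw [← h, ← intervalIntegral.integral_const_mul]
  refine intervalIntegral.integral_congr fun u hu => ?_
  rw [uIcc_of_le (div_nonneg hL hc.le)] at hu
  rw [mul_rpow hc.le hu.1, ← mul_assoc, hcε, show ε * u ^ p + ε = ε * (1 + u ^ p) by ring,
    one_div, one_div, mul_inv]
  ring

theorem rpow_mul_integral_one_div_mul_abs_rpow_add {κ p δ ε : ℝ} (hκ : 0 < κ) (hp : p ≠ 0)
    (hδ : δ ≤ 0) (hε : 0 < ε) :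
    ε ^ (1 - 1 / p) * ∫ s in δ..0, 1 / (κ * |s| ^ p + ε)
      = κ ^ (-(1 / p)) * ∫ u in (0:ℝ)..-δ / (ε / κ) ^ (1 / p), 1 / (1 + u ^ p) := by
  set c := (ε / κ) ^ (1 / p) with hc_def
  have hc : 0 < c := by positivity
  have hcε : κ * c ^ p = ε := by
    rw [← rpow_mul (by positivity), one_div_mul_cancel hp, rpow_one, mul_div_cancel₀ _ hκ.ne']
  have hreflect : ∫ s in δ..0, 1 / (κ * |s| ^ p + ε) = ∫ x in (0:ℝ)..-δ, 1 / (κ * x ^ p + ε) := by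
    have h := intervalIntegral.integral_comp_neg (a := 0) (b := -δ)
      fun s => 1 / (κ * |s| ^ p + ε)
    rw [neg_neg, neg_zero] at h
    rw [← h]
    refine intervalIntegral.integral_congr fun x hx => ?_
    rw [uIcc_of_le (neg_nonneg.2 hδ)] at hx
    simp only [abs_neg, abs_of_nonneg hx.1]
  have hprefactor : ε ^ (1 - 1 / p) * (c / ε) = κ ^ (-(1 / p)) := by
    rw [hc_def, div_rpow hε.le hκ.le, rpow_neg hκ.le, rpow_sub hε, rpow_one]
    field_simp
  rw [hreflect, integral_one_div_mul_rpow_add hc hcε (neg_nonneg.2 hδ), ← mul_assoc, hprefactor]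

theorem tendsto_div_div_rpow_nhdsGT_zero_atTop {κ q L : ℝ} (hκ : 0 < κ) (hq : 0 < q) (hL : 0 < L) :
    Tendsto (fun ε : ℝ => L / (ε / κ) ^ q) (nhdsWithin 0 (Ioi 0)) atTop := by
  have h := ((tendsto_rpow_atTop hq).comp
    (tendsto_inv_nhdsGT_zero.const_mul_atTop hκ)).const_mul_atTop hL
  refine h.congr' ?_
  filter_upwards [self_mem_nhdsWithin] with ε (hε : 0 < ε)
  simp only [Function.comp_apply]
  rw [div_eq_mul_inv L, ← inv_rpow (by positivity), inv_div, div_eq_mul_inv κ]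

/-- with ℓ_ε = ∫_δ^0 ds/(κ|s|^{1+α} + ε) one has
ε^{α/(α+1)} ℓ_ε → κ^{−1/(α+1)} (π/(α+1))/sin(π/(α+1)) as ε → 0⁺. -/
theorem stmt_2 (κ α δ : ℝ) (hκ : 0 < κ) (hα : 0 < α) (hδ : δ < 0)
    (ℓ : ℝ → ℝ)
    (hℓ : ∀ ε, 0 < ε → ℓ ε = ∫ s in δ..(0 : ℝ), 1 / (κ * |s| ^ (1 + α) + ε)) :
    Tendsto (fun ε : ℝ => ε ^ (α / (α + 1)) * ℓ ε) (nhdsWithin 0 (Ioi 0))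
      (nhds (κ ^ (-(1 / (α + 1))) * ((π / (α + 1)) / Real.sin (π / (α + 1))))) := by
  have hp : 1 < α + 1 := by linarith
  have hexp : α / (α + 1) = 1 - 1 / (α + 1) := by field_simp; ring
  have hT := tendsto_div_div_rpow_nhdsGT_zero_atTop hκ (one_div_pos.2 (by linarith : 0 < α + 1))
    (neg_pos.2 hδ)
  have hlim := ((intervalIntegral_tendsto_integral_Ioi 0
    (integrableOn_Ioi_one_div_one_add_rpow hp) hT).const_mul (κ ^ (-(1 / (α + 1)))))
  rw [integral_Ioi_one_div_one_add_rpow hp] at hlim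
  refine hlim.congr' ?_
  filter_upwards [self_mem_nhdsWithin] with ε (hε : 0 < ε)
  rw [hℓ ε hε, add_comm 1 α, hexp,
    rpow_mul_integral_one_div_mul_abs_rpow_add hκ (by linarith) hδ.le hε]
end

section
/- Let κ > 0, α > 0 and δ < 0. For every ε > 0, sup_{x₁ ∈ [0, ℓ_ε)} |μ_ε(x₁) − μ₀(x₁)| ≤ |μ₀(ℓ_ε)|, and consequently sup_{x₁ ∈ [0, ℓ_ε)} |μ_ε(x₁) − μ₀(x₁)| → 0 as ε → 0⁺ (note μ₀(ℓ_ε) → 0 as ε → 0⁺ since ℓ_ε → +∞). -/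
/-!
Work on the positive half-line with `f_ε t = 1 / (κ t^(1+α) + ε)` and `d = -δ`. For
`a = -μ_ε x₁`, `b = -μ₀ x₁` and `c = -μ₀ ℓ_ε` we have `∫_a^d f_ε = x₁ = ∫_b^d f₀` and
`∫_c^d f₀ = ℓ_ε = ∫_0^d f_ε`. Since `f_ε ≤ f₀`, `a ≤ b`. For `b ≤ a + c`, compare `f_ε` on `[0, d]`
with the shifted profile `t ↦ f₀ (t + c)` on `[0, d - c]`: they have the same integral, and by
convexity of `t ^ (1 + α)` they cross at most once, whence `∫_{a+c}^d f₀ ≤ ∫_a^d f_ε = x₁`.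
Finally `ℓ_ε → ∞` as `ε → 0⁺` and `μ₀ x → 0` as `x → ∞`.
-/

open Set MeasureTheory intervalIntegral Filter Topology

theorem ConvexOn.map_add_sub_map_le {s : Set ℝ} {f : ℝ → ℝ} (hf : ConvexOn ℝ s f) {x y c : ℝ}
    (hx : x ∈ s) (hyc : y + c ∈ s) (hxy : x ≤ y) (hc : 0 ≤ c) :
    f (x + c) - f x ≤ f (y + c) - f y := by
  rcases hc.eq_or_lt with rfl | hc
  · simp
  rcases hxy.eq_or_lt with rfl | hxy
  · rfl
  have hxc : x + c ∈ s := hf.1.ordConnected.out hx hyc ⟨by linarith, by linarith⟩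
  have hy : y ∈ s := hf.1.ordConnected.out hx hyc ⟨hxy.le, by linarith⟩
  have hslope : (f (x + c) - f x) / c ≤ (f (y + c) - f y) / c :=
    calc (f (x + c) - f x) / c = (f (x + c) - f x) / (x + c - x) := by ring_nf
      _ ≤ (f (y + c) - f x) / (y + c - x) :=
        hf.secant_mono hx hxc hyc (by linarith) (by linarith) (by linarith)
      _ = (f x - f (y + c)) / (x - (y + c)) := by rw [← neg_div_neg_eq, neg_sub, neg_sub]
      _ ≤ (f y - f (y + c)) / (y - (y + c)) :=
        hf.secant_mono hyc hx hy (by linarith) (by linarith) hxy.le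
      _ = (f (y + c) - f y) / c := by rw [← neg_div_neg_eq, neg_sub, neg_sub]; ring_nf
  exact (div_le_div_iff_of_pos_right hc).1 hslope

theorem intervalIntegral.integral_le_of_single_crossing {f g : ℝ → ℝ} {x₀ a L D : ℝ}
    (hx₀a : x₀ ≤ a) (haL : a ≤ L) (hLD : L ≤ D)
    (hf : IntervalIntegrable f volume x₀ D) (hg : IntervalIntegrable g volume x₀ L)
    (hfg : ∫ x in x₀..L, g x = ∫ x in x₀..D, f x) (hf₀ : ∀ x ∈ Icc L D, 0 ≤ f x)
    (hcross : (∀ x ∈ Icc x₀ a, f x ≤ g x) ∨ ∀ x ∈ Icc a L, g x ≤ f x) :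
    ∫ x in a..L, g x ≤ ∫ x in a..D, f x := by
  have hf' {u v : ℝ} (hu : x₀ ≤ u) (huv : u ≤ v) (hv : v ≤ D) : IntervalIntegrable f volume u v :=
    hf.mono_set <| by
      rw [uIcc_of_le huv, uIcc_of_le (hu.trans (huv.trans hv))]; exact Icc_subset_Icc hu hv
  have hg' {u v : ℝ} (hu : x₀ ≤ u) (huv : u ≤ v) (hv : v ≤ L) : IntervalIntegrable g volume u v :=
    hg.mono_set <| by
      rw [uIcc_of_le huv, uIcc_of_le (hu.trans (huv.trans hv))]; exact Icc_subset_Icc hu hv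
  have haD : a ≤ D := haL.trans hLD
  rcases hcross with hleft | hright
  · have hsplit_f := integral_add_adjacent_intervals (hf' le_rfl hx₀a haD) (hf' hx₀a haD le_rfl)
    have hsplit_g := integral_add_adjacent_intervals (hg' le_rfl hx₀a haL) (hg' hx₀a haL le_rfl)
    have := integral_mono_on hx₀a (hf' le_rfl hx₀a haD) (hg' le_rfl hx₀a haL) hleft
    linarith
  · have hsplit_f := integral_add_adjacent_intervals (hf' hx₀a haL hLD)
      (hf' (hx₀a.trans haL) hLD le_rfl)
    have := integral_mono_on haL (hg' hx₀a haL le_rfl) (hf' hx₀a haL hLD) hright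
    have := integral_nonneg (μ := volume) hLD hf₀
    linarith

theorem intervalIntegral.integral_comp_abs_of_nonpos {f : ℝ → ℝ} {a b : ℝ} (ha : a ≤ 0)
    (hb : b ≤ 0) : ∫ x in a..b, f |x| = ∫ x in -b..-a, f x := by
  rw [← integral_comp_neg]
  refine integral_congr fun x hx => ?_
  have : x ≤ 0 := by rcases mem_uIcc.1 hx with h | h <;> linarith [h.2]
  simp only [abs_of_nonpos this]

theorem continuousOn_one_div_mul_rpow_add {κ p ε : ℝ} (hκ : 0 ≤ κ) (hp : 0 ≤ p) (hε : 0 < ε) :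
    ContinuousOn (fun t : ℝ => 1 / (κ * t ^ p + ε)) (Ici 0) := by
  refine continuousOn_const.div (by fun_prop) fun t (ht : 0 ≤ t) => ?_
  have := Real.rpow_nonneg ht p
  positivity

theorem continuousOn_one_div_mul_rpow {κ p : ℝ} (hκ : κ ≠ 0) :
    ContinuousOn (fun t : ℝ => 1 / (κ * t ^ p)) (Ioi 0) := by
  refine continuousOn_const.div ?_ fun t (ht : 0 < t) => ?_
  · exact continuousOn_const.mul fun t ht =>
      (Real.continuousAt_rpow_const _ _ (Or.inl (ne_of_gt ht))).continuousWithinAt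
  · exact mul_ne_zero hκ (Real.rpow_pos_of_pos ht p).ne'

theorem integral_one_div_mul_rpow {κ α u v : ℝ} (hκ : κ ≠ 0) (hα : α ≠ 0) (hu : 0 < u)
    (hv : 0 < v) :
    ∫ t in u..v, 1 / (κ * t ^ (1 + α)) = (α * κ)⁻¹ * (u ^ (-α) - v ^ (-α)) := by
  have h0 : (0 : ℝ) ∉ uIcc u v := fun h => by
    rcases mem_uIcc.1 h with h | h <;> linarith [h.1]
  have hint : ∫ t in u..v, t ^ (-(1 + α)) = (u ^ (-α) - v ^ (-α)) / α := by
    rw [integral_rpow (Or.inr ⟨by contrapose! hα; linarith, h0⟩), show -(1 + α) + 1 = -α by ring]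
    field_simp
    ring
  calc ∫ t in u..v, 1 / (κ * t ^ (1 + α)) = ∫ t in u..v, κ⁻¹ * t ^ (-(1 + α)) := by
        refine integral_congr fun t ht => ?_
        have : 0 < t := by rcases mem_uIcc.1 ht with h | h <;> linarith [h.1]
        simp only [Real.rpow_neg this.le]
        field_simp
    _ = _ := by rw [intervalIntegral.integral_const_mul, hint]; field_simp

theorem integral_one_div_mul_rpow_shift_le {κ α ε a c d : ℝ} (hκ : 0 < κ) (hα : 0 < α)
    (hε : 0 < ε) (ha : 0 ≤ a) (hc : 0 < c) (hacd : a + c ≤ d)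
    (hcd : ∫ t in c..d, 1 / (κ * t ^ (1 + α)) = ∫ t in (0 : ℝ)..d, 1 / (κ * t ^ (1 + α) + ε)) :
    ∫ t in (a + c)..d, 1 / (κ * t ^ (1 + α)) ≤ ∫ t in a..d, 1 / (κ * t ^ (1 + α) + ε) := by
  have hp : 0 < 1 + α := by linarith
  have hf : IntervalIntegrable (fun t : ℝ => 1 / (κ * t ^ (1 + α) + ε)) volume 0 d :=
    ((continuousOn_one_div_mul_rpow_add hκ.le hp.le hε).mono
      Icc_subset_Ici_self).intervalIntegrable_of_Icc (by linarith)
  have hg : IntervalIntegrable (fun t : ℝ => 1 / (κ * (t + c) ^ (1 + α))) volume 0 (d - c) := by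
    have := (((continuousOn_one_div_mul_rpow (p := 1 + α) hκ.ne').mono fun t (ht : t ∈ Icc c d) =>
      hc.trans_le ht.1).intervalIntegrable_of_Icc (by linarith)).comp_add_right c
    rwa [sub_self] at this
  have hmono {s t : ℝ} (hs : 0 ≤ s) (hst : s ≤ t) :
      (s + c) ^ (1 + α) - s ^ (1 + α) ≤ (t + c) ^ (1 + α) - t ^ (1 + α) :=
    (convexOn_rpow (by linarith)).map_add_sub_map_le hs (by simp only [mem_Ici]; linarith) hst hc.le
  have hcross : (∀ t ∈ Icc 0 a, 1 / (κ * t ^ (1 + α) + ε) ≤ 1 / (κ * (t + c) ^ (1 + α))) ∨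
      ∀ t ∈ Icc a (d - c), 1 / (κ * (t + c) ^ (1 + α)) ≤ 1 / (κ * t ^ (1 + α) + ε) := by
    by_cases hψ : κ * (a + c) ^ (1 + α) ≤ κ * a ^ (1 + α) + ε
    · refine Or.inl fun t ht => one_div_le_one_div_of_le ?_ ?_
      · have := Real.rpow_pos_of_pos (by linarith [ht.1] : 0 < t + c) (1 + α)
        positivity
      · nlinarith [hmono ht.1 ht.2]
    · refine Or.inr fun t ht => one_div_le_one_div_of_le ?_ ?_
      · have := Real.rpow_nonneg (ha.trans ht.1) (1 + α)
        positivity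
      · nlinarith [hmono ha ht.1]
  have := integral_le_of_single_crossing ha (by linarith) (by linarith) hf hg
    (by rw [integral_comp_add_right (fun t => 1 / (κ * t ^ (1 + α))), zero_add, sub_add_cancel,
      hcd])
    (fun t ht => (one_div_pos.2 (by
      have := Real.rpow_nonneg (ha.trans (by linarith [ht.1] : a ≤ t)) (1 + α)
      positivity)).le) hcross
  rwa [integral_comp_add_right (fun t => 1 / (κ * t ^ (1 + α))), sub_add_cancel] at this

theorem le_and_le_add_of_integral_eq {κ α ε a b c d x : ℝ} (hκ : 0 < κ) (hα : 0 < α) (hε : 0 < ε)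
    (ha : 0 < a) (had : a ≤ d) (hb : 0 < b) (hc : 0 < c)
    (hxa : ∫ t in a..d, 1 / (κ * t ^ (1 + α) + ε) = x)
    (hxb : ∫ t in b..d, 1 / (κ * t ^ (1 + α)) = x)
    (hcd : ∫ t in c..d, 1 / (κ * t ^ (1 + α)) = ∫ t in (0 : ℝ)..d, 1 / (κ * t ^ (1 + α) + ε)) :
    a ≤ b ∧ b ≤ a + c := by
  have hd : 0 < d := ha.trans_le had
  have hA : 0 < α * κ := by positivity
  have hF (u v : ℝ) (hu : 0 < u) (hv : 0 < v) :
      ∫ t in u..v, 1 / (κ * t ^ (1 + α)) = (α * κ)⁻¹ * u ^ (-α) - (α * κ)⁻¹ * v ^ (-α) := by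
    rw [integral_one_div_mul_rpow hκ.ne' hα.ne' hu hv, mul_sub]
  have hF_le (u v : ℝ) (hu : 0 < u) (hv : 0 < v) :
      (α * κ)⁻¹ * u ^ (-α) ≤ (α * κ)⁻¹ * v ^ (-α) ↔ v ≤ u := by
    rw [mul_le_mul_iff_right₀ (inv_pos.2 hA), Real.rpow_le_rpow_iff_of_neg hu hv (by linarith)]
  rw [hF b d hb hd] at hxb
  constructor
  · have hle : ∫ t in a..d, 1 / (κ * t ^ (1 + α) + ε) ≤ ∫ t in a..d, 1 / (κ * t ^ (1 + α)) := by
      refine integral_mono_on had ?_ ?_ fun t ht => ?_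
      · exact ((continuousOn_one_div_mul_rpow_add hκ.le (by linarith) hε).mono
          fun t ht => ha.le.trans ht.1).intervalIntegrable_of_Icc had
      · exact ((continuousOn_one_div_mul_rpow hκ.ne').mono
          fun t ht => ha.trans_le ht.1).intervalIntegrable_of_Icc had
      · have := Real.rpow_pos_of_pos (ha.trans_le ht.1) (1 + α)
        exact one_div_le_one_div_of_le (by positivity) (by linarith)
    rw [hF a d ha hd] at hle
    exact (hF_le b a hb ha).1 (by linarith)
  · by_cases hacd : a + c ≤ d
    · have hkey := integral_one_div_mul_rpow_shift_le hκ hα hε ha.le hc hacd hcd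
      rw [hF (a + c) d (by linarith) hd, hxa] at hkey
      exact (hF_le (a + c) b (by linarith) hb).1 (by linarith)
    · have hx : 0 ≤ x := hxa ▸ integral_nonneg had fun t ht => by
        have := Real.rpow_nonneg (ha.le.trans ht.1) (1 + α)
        positivity
      have hbd : b ≤ d := (hF_le d b hd hb).1 (by linarith)
      linarith

theorem integral_one_div_mul_rpow_eq_of_eq {κ α d x b : ℝ} (hκ : 0 < κ) (hα : 0 < α) (hd : 0 < d)
    (hx : 0 ≤ x) (hb : b = (α * κ) ^ (-(1 / α)) * (x + (α * κ)⁻¹ * d ^ (-α)) ^ (-(1 / α))) :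
    0 < b ∧ ∫ t in b..d, 1 / (κ * t ^ (1 + α)) = x := by
  have hA : 0 < α * κ := by positivity
  have hy : 0 < α * κ * (x + (α * κ)⁻¹ * d ^ (-α)) := by positivity
  rw [← Real.mul_rpow hA.le (by positivity)] at hb
  have hb_pos : 0 < b := hb ▸ Real.rpow_pos_of_pos hy _
  refine ⟨hb_pos, ?_⟩
  rw [integral_one_div_mul_rpow hκ.ne' hα.ne' hb_pos hd, hb, ← Real.rpow_mul hy.le,
    show -(1 / α) * -α = 1 by field_simp, Real.rpow_one]
  field_simp
  ring

theorem tendsto_integral_one_div_mul_rpow_add {κ α d : ℝ} (hκ : 0 ≤ κ) (hα : 0 < α) (hd : 0 < d) :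
    Tendsto (fun ε => ∫ t in (0 : ℝ)..d, 1 / (κ * t ^ (1 + α) + ε)) (𝓝[>] 0) atTop := by
  have hp : 0 < 1 + α := by linarith
  -- on `[0, ε ^ (1 + α)⁻¹]` the integrand is at least `1 / ((κ + 1) * ε)`
  have hbound : ∀ ε ∈ Ioo 0 (d ^ (1 + α)),
      ε ^ ((1 + α)⁻¹ - 1) / (κ + 1) ≤ ∫ t in (0 : ℝ)..d, 1 / (κ * t ^ (1 + α) + ε) := by
    rintro ε ⟨hε, hεd⟩
    set r := ε ^ (1 + α)⁻¹ with hr_def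
    have hr : 0 < r := Real.rpow_pos_of_pos hε _
    have hrp : r ^ (1 + α) = ε := Real.rpow_inv_rpow hε.le hp.ne'
    have hrd : r ≤ d := by
      calc r ≤ (d ^ (1 + α)) ^ (1 + α)⁻¹ := Real.rpow_le_rpow hε.le hεd.le (by positivity)
        _ = d := Real.rpow_rpow_inv hd.le hp.ne'
    have hint (u v : ℝ) (hu : 0 ≤ u) (huv : u ≤ v) :
        IntervalIntegrable (fun t : ℝ => 1 / (κ * t ^ (1 + α) + ε)) volume u v :=
      ((continuousOn_one_div_mul_rpow_add hκ hp.le hε).mono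
        (Icc_subset_Ici_self.trans (Ici_subset_Ici.2 hu))).intervalIntegrable_of_Icc huv
    have hpos (t : ℝ) (ht : 0 ≤ t) : 0 < κ * t ^ (1 + α) + ε := by
      have := Real.rpow_nonneg ht (1 + α)
      positivity
    calc ε ^ ((1 + α)⁻¹ - 1) / (κ + 1) = ∫ _ in (0 : ℝ)..r, 1 / ((κ + 1) * ε) := by
          rw [intervalIntegral.integral_const, smul_eq_mul, sub_zero, Real.rpow_sub_one hε.ne',
            ← hr_def]
          field_simp
      _ ≤ ∫ t in (0 : ℝ)..r, 1 / (κ * t ^ (1 + α) + ε) := by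
          refine integral_mono_on hr.le intervalIntegrable_const (hint 0 r le_rfl hr.le)
            fun t ht => one_div_le_one_div_of_le (hpos t ht.1) ?_
          have := Real.rpow_le_rpow ht.1 ht.2 hp.le
          rw [hrp] at this
          nlinarith
      _ ≤ ∫ t in (0 : ℝ)..d, 1 / (κ * t ^ (1 + α) + ε) := by
          rw [← integral_add_adjacent_intervals (hint 0 r le_rfl hr.le) (hint r d hr.le hrd)]
          have := integral_nonneg (μ := volume) hrd fun t ht =>
            (one_div_pos.2 (hpos t (hr.le.trans ht.1))).le
          linarith
  have hexp : (1 + α)⁻¹ - 1 < 0 := by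
    have := inv_lt_one_of_one_lt₀ (by linarith : 1 < 1 + α)
    linarith
  refine tendsto_atTop_mono' _ ?_
    ((tendsto_rpow_neg_nhdsGT_zero hexp).atTop_div_const (by linarith : (0 : ℝ) < κ + 1))
  filter_upwards [Ioo_mem_nhdsGT (Real.rpow_pos_of_pos hd (1 + α))] using hbound

/-- sup_{x₁ ∈ [0,ℓ_ε)} |μ_ε(x₁) − μ₀(x₁)| ≤ |μ₀(ℓ_ε)|, and this sup tends
to 0 as ε → 0⁺. Here μ_ε is the inverse of ρ_ε(ξ₁) = ∫_δ^{ξ₁} ds/(κ|s|^{1+α}+ε) on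
[0, ℓ_ε), and μ₀ is given by the explicit formula. -/
theorem stmt_3 (κ α δ : ℝ) (hκ : 0 < κ) (hα : 0 < α) (hδ : δ < 0)
    (xhat : ℝ) (hxhat : xhat = (α * κ)⁻¹ * |δ| ^ (-α))
    (ℓ : ℝ → ℝ)
    (hℓ : ∀ ε, 0 < ε → ℓ ε = ∫ s in δ..(0 : ℝ), 1 / (κ * |s| ^ (1 + α) + ε))
    (μ : ℝ → ℝ → ℝ)
    (hμ0 : ∀ x₁, μ 0 x₁ = -((α * κ) ^ (-(1 / α)) * (x₁ + xhat) ^ (-(1 / α))))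
    (hμ : ∀ ε, 0 < ε → ∀ x₁ ∈ Ico (0 : ℝ) (ℓ ε),
      μ ε x₁ ∈ Ico δ 0 ∧ (∫ s in δ..(μ ε x₁), 1 / (κ * |s| ^ (1 + α) + ε)) = x₁) :
    (∀ ε, 0 < ε → ∀ x₁ ∈ Ico (0 : ℝ) (ℓ ε), |μ ε x₁ - μ 0 x₁| ≤ |μ 0 (ℓ ε)|) ∧
    (∀ η > (0 : ℝ), ∃ ε₀ > (0 : ℝ), ∀ ε, 0 < ε → ε < ε₀ →
      ∀ x₁ ∈ Ico (0 : ℝ) (ℓ ε), |μ ε x₁ - μ 0 x₁| < η) := by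
  have hd : 0 < -δ := neg_pos.2 hδ
  have hℓ_eq (ε : ℝ) (hε : 0 < ε) : ℓ ε = ∫ t in (0 : ℝ)..-δ, 1 / (κ * t ^ (1 + α) + ε) := by
    rw [hℓ ε hε, integral_comp_abs_of_nonpos (f := fun t => 1 / (κ * t ^ (1 + α) + ε)) hδ.le le_rfl,
      neg_zero]
  have hμ0_solves (x : ℝ) (hx : 0 ≤ x) : 0 < -μ 0 x ∧ ∫ t in (-μ 0 x)..-δ, 1 / (κ * t ^ (1 + α)) = x :=
    integral_one_div_mul_rpow_eq_of_eq hκ hα hd hx (by rw [hμ0, neg_neg, hxhat, abs_of_neg hδ])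
  have hbound : ∀ ε, 0 < ε → ∀ x₁ ∈ Ico (0 : ℝ) (ℓ ε), |μ ε x₁ - μ 0 x₁| ≤ |μ 0 (ℓ ε)| := by
    intro ε hε x₁ hx₁
    obtain ⟨⟨hδμ, hμneg⟩, hint⟩ := hμ ε hε x₁ hx₁
    rw [integral_comp_abs_of_nonpos (f := fun t => 1 / (κ * t ^ (1 + α) + ε)) hδ.le hμneg.le]
      at hint
    obtain ⟨hb, hxb⟩ := hμ0_solves x₁ hx₁.1
    obtain ⟨hc, hcd⟩ := hμ0_solves (ℓ ε) (hx₁.1.trans hx₁.2.le)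
    obtain ⟨hab, hbac⟩ := le_and_le_add_of_integral_eq hκ hα hε (neg_pos.2 hμneg) (by linarith)
      hb hc hint hxb (hcd.trans (hℓ_eq ε hε))
    rw [abs_of_neg (neg_pos.1 hc), abs_le]
    constructor <;> linarith
  refine ⟨hbound, fun η hη => ?_⟩
  have hℓ_tendsto : Tendsto ℓ (𝓝[>] 0) atTop :=
    (tendsto_integral_one_div_mul_rpow_add hκ.le hα hd).congr'
      (eventually_nhdsWithin_of_forall fun ε hε => (hℓ_eq ε hε).symm)
  have hμ0_tendsto : Tendsto (fun x => |μ 0 x|) atTop (𝓝 0) := by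
    have := (((tendsto_rpow_neg_atTop (by positivity : 0 < 1 / α)).comp
      (tendsto_atTop_add_const_right _ xhat tendsto_id)).const_mul ((α * κ) ^ (-(1 / α)))).neg.abs
    simpa [hμ0] using this
  obtain ⟨ε₀, hε₀, hsmall⟩ := (nhdsGT_basis 0).eventually_iff.1
    ((hμ0_tendsto.comp hℓ_tendsto).eventually (gt_mem_nhds hη))
  exact ⟨ε₀, hε₀, fun ε hε hεε₀ x₁ hx₁ => (hbound ε hε x₁ hx₁).trans_lt (hsmall ⟨hε, hεε₀⟩)⟩
end

section
/- Let κ > 0, α > 0, δ < 0 and ε* > 0. There exists a constant C₁ > 0, depending only on α, κ, δ and ε*, such that for every ε ∈ [0, ε*] and every x₁ ∈ [0, ℓ_ε): |μ_ε(x₁)| ≤ C₁ (1 + x₁)^{−1/α}. -/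
open Set MeasureTheory

/-!
Dropping `ε` only enlarges the integrand, and `1 / (κ (-s)^(1+α))` has the explicit antiderivative
`(ακ)⁻¹ (-s)^(-α)`. Hence `x₁ = ∫_δ^{μ_ε(x₁)} ds / H_ε(s) ≤ (ακ)⁻¹ (|μ_ε(x₁)|^(-α) - |δ|^(-α))`,
that is `|μ_ε(x₁)| ≤ (ακ)^(-1/α) (x₁ + x̂)^(-1/α) = |μ₀(x₁)|` for every `ε`. Finally
`x₁ + x̂ ≥ min 1 x̂ · (1 + x₁)`, so `C₁ = (ακ)^(-1/α) (min 1 x̂)^(-1/α)` works.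
-/

lemma integral_neg_rpow {a b r : ℝ} (ha : a < 0) (hb : b < 0) (hr : r ≠ -1) :
    ∫ s in a..b, (-s) ^ r = ((-a) ^ (r + 1) - (-b) ^ (r + 1)) / (r + 1) := by
  rw [intervalIntegral.integral_comp_neg (fun s => s ^ r),
    integral_rpow (Or.inr ⟨hr, notMem_uIcc_of_lt (neg_pos.2 hb) (neg_pos.2 ha)⟩)]

lemma intervalIntegrable_neg_rpow {a b r : ℝ} (ha : a < 0) (hb : b < 0) :
    IntervalIntegrable (fun s => (-s) ^ r) volume a b := by
  refine ContinuousOn.intervalIntegrable fun s hs => ?_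
  have hs0 : s < 0 := lt_of_le_of_lt hs.2 (max_lt ha hb)
  exact (continuousAt_id.neg.rpow_const (Or.inl (neg_pos.2 hs0).ne')).continuousWithinAt

lemma one_div_mul_rpow_add_le {κ ε t p : ℝ} (hκ : 0 < κ) (hε : 0 ≤ ε) (ht : 0 < t) :
    1 / (κ * t ^ p + ε) ≤ κ⁻¹ * t ^ (-p) := by
  rw [Real.rpow_neg ht.le, ← mul_inv, ← one_div]
  exact one_div_le_one_div_of_le (by positivity) (by linarith)

lemma integral_one_div_add_le {κ α ε δ m : ℝ} (hκ : 0 < κ) (hα : 0 < α) (hε : 0 ≤ ε)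
    (hδm : δ ≤ m) (hm : m < 0) :
    ∫ s in δ..m, 1 / (κ * |s| ^ (1 + α) + ε) ≤ (α * κ)⁻¹ * ((-m) ^ (-α) - (-δ) ^ (-α)) := by
  have hδ : δ < 0 := hδm.trans_lt hm
  have hmajorant : ∫ s in δ..m, κ⁻¹ * (-s) ^ (-(1 + α))
      = (α * κ)⁻¹ * ((-m) ^ (-α) - (-δ) ^ (-α)) := by
    rw [intervalIntegral.integral_const_mul, integral_neg_rpow hδ hm (by linarith),
      show -(1 + α) + 1 = -α by ring]
    field_simp
    ring
  rw [← hmajorant]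
  refine intervalIntegral.integral_mono_on hδm ?_
    ((intervalIntegrable_neg_rpow hδ hm).const_mul _) fun s hs => ?_
  · refine ContinuousOn.intervalIntegrable fun s hs => ?_
    have hs0 : 0 < |s| := abs_pos.2 (lt_of_le_of_lt hs.2 (max_lt hδ hm)).ne
    refine (continuousAt_const.div (by fun_prop (disch := positivity)) ?_).continuousWithinAt
    positivity
  · rw [abs_of_neg (hs.2.trans_lt hm)]
    exact one_div_mul_rpow_add_le hκ hε (by linarith [hs.2])

lemma neg_le_of_integral_one_div_add_eq {κ α ε δ m x : ℝ} (hκ : 0 < κ) (hα : 0 < α)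
    (hε : 0 ≤ ε) (hδm : δ ≤ m) (hm : m < 0) (hx : 0 ≤ x)
    (hint : ∫ s in δ..m, 1 / (κ * |s| ^ (1 + α) + ε) = x) :
    -m ≤ (α * κ) ^ (-(1 / α)) * (x + (α * κ)⁻¹ * |δ| ^ (-α)) ^ (-(1 / α)) := by
  have hακ : 0 < α * κ := mul_pos hα hκ
  have hδ0 : 0 < |δ| := abs_pos.2 (hδm.trans_lt hm).ne
  have hbound := hint ▸ integral_one_div_add_le hκ hα hε hδm hm
  have hle : α * κ * (x + (α * κ)⁻¹ * |δ| ^ (-α)) ≤ (-m) ^ (-α) := by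
    rw [abs_of_neg (hδm.trans_lt hm)]
    refine (le_inv_mul_iff₀ hακ).1 ?_
    linarith [mul_sub (α * κ)⁻¹ ((-m) ^ (-α)) ((-δ) ^ (-α))]
  have hexp : -(1 / α) = (-α)⁻¹ := by rw [one_div, inv_neg]
  calc -m = ((-m) ^ (-α)) ^ (-α)⁻¹ := (Real.rpow_rpow_inv (by linarith) (by linarith)).symm
    _ ≤ (α * κ * (x + (α * κ)⁻¹ * |δ| ^ (-α))) ^ (-α)⁻¹ :=
        Real.rpow_le_rpow_of_nonpos (by positivity) hle (by simpa using hα.le)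
    _ = _ := by rw [Real.mul_rpow hακ.le (by positivity), hexp]

lemma add_rpow_neg_le {a x p : ℝ} (ha : 0 < a) (hx : 0 ≤ x) (hp : 0 ≤ p) :
    (x + a) ^ (-p) ≤ (min 1 a) ^ (-p) * (1 + x) ^ (-p) := by
  have hmin : 0 < min 1 a := lt_min one_pos ha
  rw [← Real.mul_rpow hmin.le (by positivity)]
  refine Real.rpow_le_rpow_of_nonpos (by positivity) ?_ (neg_nonpos.2 hp)
  nlinarith [min_le_left 1 a, min_le_right 1 a]

theorem stmt_5_general (κ α δ εstar : ℝ) (hκ : 0 < κ) (hα : 0 < α) (hδ : δ < 0)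
    (xhat : ℝ) (hxhat : xhat = (α * κ)⁻¹ * |δ| ^ (-α))
    (ℓ : ℝ → ℝ)
    (μ : ℝ → ℝ → ℝ)
    (hμ0 : ∀ x₁, μ 0 x₁ = -((α * κ) ^ (-(1 / α)) * (x₁ + xhat) ^ (-(1 / α))))
    (hμ : ∀ ε, 0 < ε → ∀ x₁ ∈ Ico (0 : ℝ) (ℓ ε),
      μ ε x₁ ∈ Ico δ 0 ∧ (∫ s in δ..(μ ε x₁), 1 / (κ * |s| ^ (1 + α) + ε)) = x₁) :
    ∃ C₁ > (0 : ℝ),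
      (∀ x₁ ∈ Ici (0 : ℝ), |μ 0 x₁| ≤ C₁ * (1 + x₁) ^ (-(1 / α))) ∧
      (∀ ε, 0 < ε → ε ≤ εstar → ∀ x₁ ∈ Ico (0 : ℝ) (ℓ ε),
        |μ ε x₁| ≤ C₁ * (1 + x₁) ^ (-(1 / α))) := by
  have hxhat0 : 0 < xhat := by
    have : 0 < |δ| := abs_pos.2 hδ.ne
    rw [hxhat]; positivity
  have hprofile : ∀ x₁ : ℝ, 0 ≤ x₁ → (α * κ) ^ (-(1 / α)) * (x₁ + xhat) ^ (-(1 / α)) ≤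
      (α * κ) ^ (-(1 / α)) * (min 1 xhat) ^ (-(1 / α)) * (1 + x₁) ^ (-(1 / α)) := by
    intro x₁ hx₁
    rw [mul_assoc]
    gcongr
    exact add_rpow_neg_le hxhat0 hx₁ (by positivity)
  refine ⟨(α * κ) ^ (-(1 / α)) * (min 1 xhat) ^ (-(1 / α)), by positivity,
    fun x₁ hx₁ => ?_, fun ε hε _ x₁ hx₁ => ?_⟩
  · have : 0 ≤ x₁ + xhat := by simp only [mem_Ici] at hx₁; linarith
    rw [hμ0, abs_neg, abs_of_nonneg (by positivity)]
    exact hprofile x₁ hx₁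
  · obtain ⟨⟨hδm, hm⟩, hint⟩ := hμ ε hε x₁ hx₁
    rw [abs_of_neg hm]
    exact (hxhat ▸ neg_le_of_integral_one_div_add_eq hκ hα hε.le hδm hm hx₁.1 hint).trans
      (hprofile x₁ hx₁.1)

/-- there is C₁ > 0 depending only on α, κ, δ, ε* such that
|μ_ε(x₁)| ≤ C₁ (1 + x₁)^{−1/α} for all ε ∈ [0, ε*] and x₁ ∈ [0, ℓ_ε)
(for ε = 0 the domain is [0, ∞)). -/
theorem stmt_5 (κ α δ εstar : ℝ) (hκ : 0 < κ) (hα : 0 < α) (hδ : δ < 0)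
    (hεstar : 0 < εstar)
    (xhat : ℝ) (hxhat : xhat = (α * κ)⁻¹ * |δ| ^ (-α))
    (ℓ : ℝ → ℝ)
    (hℓ : ∀ ε, 0 < ε → ℓ ε = ∫ s in δ..(0 : ℝ), 1 / (κ * |s| ^ (1 + α) + ε))
    (μ : ℝ → ℝ → ℝ)
    (hμ0 : ∀ x₁, μ 0 x₁ = -((α * κ) ^ (-(1 / α)) * (x₁ + xhat) ^ (-(1 / α))))
    (hμ : ∀ ε, 0 < ε → ∀ x₁ ∈ Ico (0 : ℝ) (ℓ ε),
      μ ε x₁ ∈ Ico δ 0 ∧ (∫ s in δ..(μ ε x₁), 1 / (κ * |s| ^ (1 + α) + ε)) = x₁) :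
    ∃ C₁ > (0 : ℝ),
      (∀ x₁ ∈ Ici (0 : ℝ), |μ 0 x₁| ≤ C₁ * (1 + x₁) ^ (-(1 / α))) ∧
      (∀ ε, 0 < ε → ε ≤ εstar → ∀ x₁ ∈ Ico (0 : ℝ) (ℓ ε),
        |μ ε x₁| ≤ C₁ * (1 + x₁) ^ (-(1 / α))) :=
  stmt_5_general κ α δ εstar hκ hα hδ xhat hxhat ℓ μ hμ0 hμ
end

section
/- Let κ > 0, α > 0, δ < 0 and ε* > 0. There exist constants C₂ > 0 and C₃ > 0, depending only on α, κ, δ and ε*, such that for every ε ∈ [0, ε*] and every x₁ ∈ [0, ℓ_ε): H_ε(μ_ε(x₁)) ≤ C₂ (1 + x₁)^{−1−1/α} and |H₀′(μ_ε(x₁))| ≤ C₃ (1 + x₁)^{−1}, where H₀′(s) = −(1+α)κ(−s)^{α} is the derivative of H₀(s) = κ(−s)^{1+α} for s < 0. -/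
open Set MeasureTheory

/-!
With H = H_ε(μ_ε(x₁)) and q = α/(1+α), both bounds follow from an estimate
(1 + x₁) H^q ≤ A that is uniform in ε, because κ|μ|^α ≤ κ^{1/(1+α)} H^q.
For ε = 0 the estimate is explicit, since μ₀ is. For ε > 0 write ε = κ b^{1+α}, so that
H_ε(s) = κ(|s|^{1+α} + b^{1+α}) is comparable to κ(b - s)^{1+α} for s < 0: from below up to
the factor 2^{-α} by convexity of t^{1+α}, from above by its superadditivity. Integrating the
lower comparison gives x₁ ≤ 2^α (ακ)⁻¹ (b - μ)^{-α}; the upper one at s = μ gives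
H^q ≤ κ^q (b - μ)^α.
-/

lemma Real.rpow_add_le_mul_rpow_add_rpow {a b p : ℝ} (ha : 0 ≤ a) (hb : 0 ≤ b) (hp : 1 ≤ p) :
    (a + b) ^ p ≤ 2 ^ (p - 1) * (a ^ p + b ^ p) := by
  lift a to NNReal using ha
  lift b to NNReal using hb
  exact_mod_cast NNReal.rpow_add_le_mul_rpow_add_rpow a b hp

lemma integral_sub_rpow_neg_one_sub {α b c d : ℝ} (hα : 0 < α) (hcd : c ≤ d) (hdb : d < b) :
    ∫ s in c..d, (b - s) ^ (-1 - α) = ((b - d) ^ (-α) - (b - c) ^ (-α)) / α := by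
  have h0 : (0 : ℝ) ∉ uIcc (b - d) (b - c) := by
    rw [uIcc_of_le (by linarith)]
    exact fun h => by linarith [h.1]
  rw [intervalIntegral.integral_comp_sub_left (fun t => t ^ (-1 - α)),
    integral_rpow (Or.inr ⟨by linarith, h0⟩), show -1 - α + 1 = -α by ring, div_neg, ← neg_div,
    neg_sub]

lemma rpow_rpow_one_add_div {y α : ℝ} (hy : 0 ≤ y) (hα : 0 < α) :
    (y ^ (1 + α)) ^ (α / (1 + α)) = y ^ α := by
  rw [← Real.rpow_mul hy, mul_div_cancel₀ _ (by positivity)]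

lemma mul_rpow_le_rpow_mul_rpow {κ α y ε : ℝ} (hκ : 0 < κ) (hα : 0 < α) (hy : 0 ≤ y)
    (hε : 0 ≤ ε) :
    κ * y ^ α ≤ κ ^ (1 + α)⁻¹ * (κ * y ^ (1 + α) + ε) ^ (α / (1 + α)) := by
  have hκ' : κ = κ ^ (1 + α)⁻¹ * κ ^ (α / (1 + α)) := by
    rw [← Real.rpow_add hκ, show (1 + α)⁻¹ + α / (1 + α) = 1 by field_simp, Real.rpow_one]
  calc κ * y ^ α = κ ^ (1 + α)⁻¹ * (κ * y ^ (1 + α)) ^ (α / (1 + α)) := by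
        rw [Real.mul_rpow hκ.le (by positivity), rpow_rpow_one_add_div hy hα, ← mul_assoc, ← hκ']
    _ ≤ _ := by gcongr; linarith

lemma le_mul_rpow_of_mul_rpow_le {h t A p : ℝ} (hh : 0 ≤ h) (ht : 0 < t) (hp : 0 < p)
    (H : t * h ^ p ≤ A) : h ≤ A ^ p⁻¹ * t ^ (-p⁻¹) := by
  have hA : 0 ≤ A := (mul_nonneg ht.le (Real.rpow_nonneg hh p)).trans H
  calc h = (h ^ p) ^ p⁻¹ := (Real.rpow_rpow_inv hh hp.ne').symm
    _ ≤ (A / t) ^ p⁻¹ := by gcongr; exact (le_div_iff₀' ht).2 H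
    _ = A ^ p⁻¹ * t ^ (-p⁻¹) := by
      rw [Real.div_rpow hA ht.le, Real.rpow_neg ht.le, div_eq_mul_inv]

lemma one_div_add_le_rpow_sub {κ α b s : ℝ} (hκ : 0 < κ) (hα : 0 < α) (hb : 0 ≤ b) (hs : s < 0) :
    1 / (κ * |s| ^ (1 + α) + κ * b ^ (1 + α)) ≤ 2 ^ α / κ * (b - s) ^ (-1 - α) := by
  have hbs : 0 < b - s := by linarith
  have hconvex : (b - s) ^ (1 + α) ≤ 2 ^ α * (|s| ^ (1 + α) + b ^ (1 + α)) := by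
    have := Real.rpow_add_le_mul_rpow_add_rpow hb (neg_nonneg.2 hs.le) (p := 1 + α) (by linarith)
    rwa [← sub_eq_add_neg, add_sub_cancel_left, add_comm (b ^ _), ← abs_of_neg hs] at this
  calc 1 / (κ * |s| ^ (1 + α) + κ * b ^ (1 + α))
      ≤ 1 / (κ / 2 ^ α * (b - s) ^ (1 + α)) := by
        gcongr
        rw [div_mul_eq_mul_div, div_le_iff₀ (by positivity)]
        linarith [mul_le_mul_of_nonneg_left hconvex hκ.le]
    _ = 2 ^ α / κ * (b - s) ^ (-1 - α) := by
        rw [show -1 - α = -(1 + α) by ring, Real.rpow_neg hbs.le]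
        field_simp

lemma integral_mul_rpow_le {κ α ε δ m : ℝ} (hκ : 0 < κ) (hα : 0 < α) (hε : 0 ≤ ε) (hδm : δ ≤ m)
    (hm : m < 0) :
    (∫ s in δ..m, 1 / (κ * |s| ^ (1 + α) + ε)) * (κ * |m| ^ (1 + α) + ε) ^ (α / (1 + α)) ≤
      2 ^ α * κ ^ (α / (1 + α)) / (α * κ) := by
  obtain ⟨b, hb, rfl⟩ : ∃ b, 0 ≤ b ∧ κ * b ^ (1 + α) = ε :=
    ⟨(ε / κ) ^ (1 + α)⁻¹, by positivity, by
      rw [Real.rpow_inv_rpow (by positivity) (by positivity), mul_div_cancel₀ _ hκ.ne']⟩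
  have hbm : 0 < b - m := by linarith
  have hcont₁ : ContinuousOn (fun s => 1 / (κ * |s| ^ (1 + α) + κ * b ^ (1 + α))) (uIcc δ m) := by
    refine continuousOn_const.div (by fun_prop (disch := positivity)) fun s hs => ?_
    rw [uIcc_of_le hδm] at hs
    have hs0 : s ≠ 0 := (hs.2.trans_lt hm).ne
    positivity
  have hcont₂ : ContinuousOn (fun s => 2 ^ α / κ * (b - s) ^ (-1 - α)) (uIcc δ m) := by
    refine continuousOn_const.mul (ContinuousOn.rpow_const (by fun_prop) fun s hs => Or.inl ?_)
    rw [uIcc_of_le hδm] at hs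
    linarith [hs.2]
  have hint : ∫ s in δ..m, 1 / (κ * |s| ^ (1 + α) + κ * b ^ (1 + α)) ≤
      2 ^ α / (α * κ) * (b - m) ^ (-α) :=
    calc ∫ s in δ..m, 1 / (κ * |s| ^ (1 + α) + κ * b ^ (1 + α))
        ≤ ∫ s in δ..m, 2 ^ α / κ * (b - s) ^ (-1 - α) :=
          intervalIntegral.integral_mono_on hδm hcont₁.intervalIntegrable
            hcont₂.intervalIntegrable fun s hs =>
              one_div_add_le_rpow_sub hκ hα hb (hs.2.trans_lt hm)
      _ = 2 ^ α / (α * κ) * ((b - m) ^ (-α) - (b - δ) ^ (-α)) := by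
          rw [intervalIntegral.integral_const_mul,
            integral_sub_rpow_neg_one_sub hα hδm (by linarith)]
          field_simp
      _ ≤ 2 ^ α / (α * κ) * (b - m) ^ (-α) := by
          gcongr
          exact sub_le_self _ (Real.rpow_nonneg (by linarith) _)
  have hH : (κ * |m| ^ (1 + α) + κ * b ^ (1 + α)) ^ (α / (1 + α)) ≤
      κ ^ (α / (1 + α)) * (b - m) ^ α :=
    calc (κ * |m| ^ (1 + α) + κ * b ^ (1 + α)) ^ (α / (1 + α))
        ≤ (κ * (b - m) ^ (1 + α)) ^ (α / (1 + α)) := by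
          gcongr
          rw [← mul_add, abs_of_neg hm, add_comm, sub_eq_add_neg]
          gcongr
          exact Real.add_rpow_le_rpow_add hb (by linarith) (by linarith)
      _ = κ ^ (α / (1 + α)) * (b - m) ^ α := by
          rw [Real.mul_rpow hκ.le (by positivity), rpow_rpow_one_add_div hbm.le hα]
  calc _ ≤ 2 ^ α / (α * κ) * (b - m) ^ (-α) * (κ ^ (α / (1 + α)) * (b - m) ^ α) :=
        mul_le_mul hint hH (by positivity) (by positivity)
    _ = 2 ^ α * κ ^ (α / (1 + α)) / (α * κ) := by
        rw [Real.rpow_neg hbm.le]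
        field_simp

lemma one_add_integral_mul_rpow_le {κ α ε εstar δ m x : ℝ} (hκ : 0 < κ) (hα : 0 < α)
    (hε : 0 ≤ ε) (hεs : ε ≤ εstar) (hδm : δ ≤ m) (hm : m < 0)
    (hx : ∫ s in δ..m, 1 / (κ * |s| ^ (1 + α) + ε) = x) :
    (1 + x) * (κ * |m| ^ (1 + α) + ε) ^ (α / (1 + α)) ≤
      (κ * |δ| ^ (1 + α) + εstar) ^ (α / (1 + α)) + 2 ^ α * κ ^ (α / (1 + α)) / (α * κ) := by
  rw [← hx, one_add_mul]
  refine add_le_add ?_ (integral_mul_rpow_le hκ hα hε hδm hm)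
  have hmδ : |m| ≤ |δ| := by
    rw [abs_of_neg hm, abs_of_neg (hδm.trans_lt hm)]
    linarith
  gcongr

lemma one_add_mul_rpow_le_of_eq {κ α xhat x m : ℝ} (hκ : 0 < κ) (hα : 0 < α) (hxhat : 0 < xhat)
    (hx : 0 ≤ x) (hm : m = -((α * κ) ^ (-(1 / α)) * (x + xhat) ^ (-(1 / α)))) :
    (1 + x) * (κ * |m| ^ (1 + α)) ^ (α / (1 + α)) ≤
      κ ^ (α / (1 + α)) / (α * κ) * (1 + xhat⁻¹) := by
  have hy : 0 < x + xhat := by linarith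
  have hmα : |m| ^ α = (α * κ * (x + xhat))⁻¹ := by
    rw [hm, abs_neg, ← Real.mul_rpow (by positivity) hy.le, abs_of_nonneg (by positivity),
      ← Real.rpow_mul (by positivity), neg_mul, one_div_mul_cancel hα.ne', Real.rpow_neg_one]
  have hratio : (1 + x) / (x + xhat) ≤ 1 + xhat⁻¹ := by
    have : (1 + xhat⁻¹) * (x + xhat) = 1 + x + (xhat + x / xhat) := by field_simp; ring
    rw [div_le_iff₀ hy, this]
    linarith [show 0 ≤ xhat + x / xhat by positivity]
  calc (1 + x) * (κ * |m| ^ (1 + α)) ^ (α / (1 + α))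
      = κ ^ (α / (1 + α)) / (α * κ) * ((1 + x) / (x + xhat)) := by
        rw [Real.mul_rpow hκ.le (by positivity), rpow_rpow_one_add_div (abs_nonneg m) hα, hmα]
        field_simp
    _ ≤ κ ^ (α / (1 + α)) / (α * κ) * (1 + xhat⁻¹) := by gcongr

lemma decay_bounds_of_one_add_mul_rpow_le {κ α ε m x A : ℝ} (hκ : 0 < κ) (hα : 0 < α)
    (hε : 0 ≤ ε) (hm : m ≤ 0) (hx : 0 ≤ x)
    (h : (1 + x) * (κ * |m| ^ (1 + α) + ε) ^ (α / (1 + α)) ≤ A) :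
    κ * |m| ^ (1 + α) + ε ≤ A ^ ((1 + α) / α) * (1 + x) ^ (-1 - 1 / α) ∧
      |-((1 + α) * κ * (-m) ^ α)| ≤ (1 + α) * κ ^ (1 + α)⁻¹ * A * (1 + x) ^ (-1 : ℝ) := by
  have hx' : 0 < 1 + x := by linarith
  constructor
  · have := le_mul_rpow_of_mul_rpow_le (by positivity) hx' (by positivity) h
    rwa [inv_div, show -((1 + α) / α) = -1 - 1 / α by field_simp; ring] at this
  · rw [← abs_of_nonpos hm, abs_neg, abs_of_nonneg (by positivity), Real.rpow_neg_one]
    have hH : (κ * |m| ^ (1 + α) + ε) ^ (α / (1 + α)) ≤ A / (1 + x) := (le_div_iff₀' hx').2 h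
    calc (1 + α) * κ * |m| ^ α = (1 + α) * (κ * |m| ^ α) := by ring
      _ ≤ (1 + α) * (κ ^ (1 + α)⁻¹ * (A / (1 + x))) :=
        mul_le_mul_of_nonneg_left ((mul_rpow_le_rpow_mul_rpow hκ hα (abs_nonneg m) hε).trans
          (mul_le_mul_of_nonneg_left hH (by positivity))) (by positivity)
      _ = (1 + α) * κ ^ (1 + α)⁻¹ * A * (1 + x)⁻¹ := by ring

theorem stmt_6_general (κ α δ εstar : ℝ) (hκ : 0 < κ) (hα : 0 < α) (hδ : δ < 0)
    (xhat : ℝ) (hxhat : xhat = (α * κ)⁻¹ * |δ| ^ (-α))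
    (ℓ : ℝ → ℝ)
    (μ : ℝ → ℝ → ℝ)
    (hμ0 : ∀ x₁, μ 0 x₁ = -((α * κ) ^ (-(1 / α)) * (x₁ + xhat) ^ (-(1 / α))))
    (hμ : ∀ ε, 0 < ε → ∀ x₁ ∈ Ico (0 : ℝ) (ℓ ε),
      μ ε x₁ ∈ Ico δ 0 ∧ (∫ s in δ..(μ ε x₁), 1 / (κ * |s| ^ (1 + α) + ε)) = x₁) :
    ∃ C₂ > (0 : ℝ), ∃ C₃ > (0 : ℝ),
      (∀ x₁ ∈ Ici (0 : ℝ),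
        κ * |μ 0 x₁| ^ (1 + α) ≤ C₂ * (1 + x₁) ^ (-1 - 1 / α) ∧
        |-((1 + α) * κ * (-(μ 0 x₁)) ^ α)| ≤ C₃ * (1 + x₁) ^ (-1 : ℝ)) ∧
      (∀ ε, 0 < ε → ε ≤ εstar → ∀ x₁ ∈ Ico (0 : ℝ) (ℓ ε),
        κ * |μ ε x₁| ^ (1 + α) + ε ≤ C₂ * (1 + x₁) ^ (-1 - 1 / α) ∧
        |-((1 + α) * κ * (-(μ ε x₁)) ^ α)| ≤ C₃ * (1 + x₁) ^ (-1 : ℝ)) := by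
  have hxhat_pos : 0 < xhat := by
    have := abs_pos.2 hδ.ne
    rw [hxhat]
    positivity
  set A := max (κ ^ (α / (1 + α)) / (α * κ) * (1 + xhat⁻¹))
    ((κ * |δ| ^ (1 + α) + εstar) ^ (α / (1 + α)) + 2 ^ α * κ ^ (α / (1 + α)) / (α * κ))
  have hA : 0 < A := lt_max_of_lt_left (by positivity)
  refine ⟨A ^ ((1 + α) / α), by positivity, (1 + α) * κ ^ (1 + α)⁻¹ * A, by positivity, ?_, ?_⟩
  · intro x₁ (hx₁ : 0 ≤ x₁)
    have hμ0_nonpos : μ 0 x₁ ≤ 0 := by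
      rw [hμ0]
      exact neg_nonpos.2 (by positivity)
    have := decay_bounds_of_one_add_mul_rpow_le (ε := 0) (A := A) hκ hα le_rfl hμ0_nonpos hx₁ (by
      rw [add_zero]
      exact (one_add_mul_rpow_le_of_eq hκ hα hxhat_pos hx₁ (hμ0 x₁)).trans (le_max_left _ _))
    rwa [add_zero] at this
  · intro ε hε hεs x₁ hx₁
    obtain ⟨⟨hδμ, hμ_neg⟩, hx⟩ := hμ ε hε x₁ hx₁
    exact decay_bounds_of_one_add_mul_rpow_le hκ hα hε.le hμ_neg.le hx₁.1
      ((one_add_integral_mul_rpow_le hκ hα hε.le hεs hδμ hμ_neg hx).trans (le_max_right _ _))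

/-- there exist C₂, C₃ > 0 depending only on α, κ, δ, ε* such that for all
ε ∈ [0, ε*] and x₁ ∈ [0, ℓ_ε): H_ε(μ_ε(x₁)) ≤ C₂ (1+x₁)^{−1−1/α} and
|H₀′(μ_ε(x₁))| ≤ C₃ (1+x₁)^{−1}, where H_ε(s) = κ|s|^{1+α} + ε and
H₀′(s) = −(1+α)κ(−s)^α for s < 0. -/
theorem stmt_6 (κ α δ εstar : ℝ) (hκ : 0 < κ) (hα : 0 < α) (hδ : δ < 0)
    (hεstar : 0 < εstar)
    (xhat : ℝ) (hxhat : xhat = (α * κ)⁻¹ * |δ| ^ (-α))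
    (ℓ : ℝ → ℝ)
    (hℓ : ∀ ε, 0 < ε → ℓ ε = ∫ s in δ..(0 : ℝ), 1 / (κ * |s| ^ (1 + α) + ε))
    (μ : ℝ → ℝ → ℝ)
    (hμ0 : ∀ x₁, μ 0 x₁ = -((α * κ) ^ (-(1 / α)) * (x₁ + xhat) ^ (-(1 / α))))
    (hμ : ∀ ε, 0 < ε → ∀ x₁ ∈ Ico (0 : ℝ) (ℓ ε),
      μ ε x₁ ∈ Ico δ 0 ∧ (∫ s in δ..(μ ε x₁), 1 / (κ * |s| ^ (1 + α) + ε)) = x₁) :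
    ∃ C₂ > (0 : ℝ), ∃ C₃ > (0 : ℝ),
      (∀ x₁ ∈ Ici (0 : ℝ),
        κ * |μ 0 x₁| ^ (1 + α) ≤ C₂ * (1 + x₁) ^ (-1 - 1 / α) ∧
        |-((1 + α) * κ * (-(μ 0 x₁)) ^ α)| ≤ C₃ * (1 + x₁) ^ (-1 : ℝ)) ∧
      (∀ ε, 0 < ε → ε ≤ εstar → ∀ x₁ ∈ Ico (0 : ℝ) (ℓ ε),
        κ * |μ ε x₁| ^ (1 + α) + ε ≤ C₂ * (1 + x₁) ^ (-1 - 1 / α) ∧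
        |-((1 + α) * κ * (-(μ ε x₁)) ^ α)| ≤ C₃ * (1 + x₁) ^ (-1 : ℝ)) :=
  stmt_6_general κ α δ εstar hκ hα hδ xhat hxhat ℓ μ hμ0 hμ
end

section
/- Let κ > 0, α > 0 and δ < 0. Then sup_{x₁ ∈ [0, ℓ_ε)} |H_ε(μ_ε(x₁)) − H₀(μ₀(x₁))| → 0 as ε → 0⁺. (Since μ_ε′ = H_ε(μ_ε) and μ₀′ = H₀(μ₀), this is the uniform convergence of the derivatives of μ_ε to that of μ₀ on [0, ℓ_ε).) -/
open Set MeasureTheory intervalIntegral Filter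

/-!
For `δ ≤ ξ < 0` the substitution `t = (-ξ) ^ (-α)` makes everything explicit on the `ε = 0`
side: `α κ ρ₀(ξ) = (-ξ) ^ (-α) - (-δ) ^ (-α)` and `H₀(ξ) = κ t ^ (-β)` with `β = (1 + α) / α`.
Put `a = |μ₀ x| ^ (-α) = α κ x + (-δ) ^ (-α)` and `b = |μ_ε x| ^ (-α)`, so that the quantity to
estimate is `κ b ^ (-β) + ε - κ a ^ (-β)`. Since `H_ε ≥ H₀` we have `ρ_ε ≤ ρ₀`, hence `a ≤ b`
and the quantity is at most `ε`. For the lower bound take `T` with `κ T ^ (-β)` small and `c`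
with `c ^ (-α) = 2 T`. On `[δ, -c]` the integrands `1 / H₀` and `1 / H_ε` differ by `O(ε)`.
So either `μ_ε x ≤ -c` and `b - a = O(ε)`, and `t ↦ t ^ (-β)` is Lipschitz on
`[(-δ) ^ (-α), ∞)`; or `μ_ε x > -c`, then `a ≥ T` and both `H₀`-terms are small.
-/

lemma rpow_neg_sub_rpow_neg_le {β a s t : ℝ} (hβ : 0 ≤ β) (ha : 0 < a) (has : a ≤ s)
    (hst : s ≤ t) : s ^ (-β) - t ^ (-β) ≤ β * a ^ (-β - 1) * (t - s) := by
  have hderiv : ∀ x ∈ interior (Ici a), -(β * a ^ (-β - 1)) ≤ deriv (fun t => t ^ (-β)) x := by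
    intro x hx
    rw [interior_Ici, mem_Ioi] at hx
    rw [Real.deriv_rpow_const, neg_mul, neg_le_neg_iff]
    exact mul_le_mul_of_nonneg_left (Real.rpow_le_rpow_of_nonpos ha hx.le (by linarith)) hβ
  have := (convex_Ici a).mul_sub_le_image_sub_of_le_deriv
    (fun x hx =>
      (Real.continuousAt_rpow_const _ _ (Or.inl (ha.trans_le hx).ne')).continuousWithinAt)
    (fun x hx => (Real.differentiableAt_rpow_const_of_ne _
      (ha.trans (by simpa using hx)).ne').differentiableWithinAt) hderiv
    s has t (has.trans hst) hst
  linarith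

section

variable {κ α ε : ℝ}

lemma intervalIntegrable_one_div_rpow_abs_add (hκ : 0 < κ) (hε : 0 ≤ ε) {a b : ℝ}
    (ha : a < 0) (hb : b < 0) :
    IntervalIntegrable (fun s => 1 / (κ * |s| ^ (1 + α) + ε)) volume a b := by
  refine ContinuousOn.intervalIntegrable fun s hs => ?_
  have hs0 : s < 0 := hs.2.trans_lt (max_lt ha hb)
  have hpos : 0 < κ * |s| ^ (1 + α) + ε := by
    have := Real.rpow_pos_of_pos (abs_pos.2 hs0.ne) (1 + α); positivity
  have habs : |s| ≠ 0 := abs_ne_zero.2 hs0.ne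
  exact ContinuousAt.continuousWithinAt (by fun_prop (disch := simp [habs, hpos.ne']))

lemma integral_one_div_rpow_abs (hκ : 0 < κ) (hα : α ≠ 0) {a b : ℝ} (ha : a < 0) (hb : b < 0) :
    ∫ s in a..b, 1 / (κ * |s| ^ (1 + α)) = ((-b) ^ (-α) - (-a) ^ (-α)) / (α * κ) := by
  have hderiv : ∀ s ∈ uIcc a b,
      HasDerivAt (fun t => (-t) ^ (-α) / (α * κ)) (1 / (κ * |s| ^ (1 + α))) s := by
    intro s hs
    have hs0 : 0 < -s := neg_pos.2 (hs.2.trans_lt (max_lt ha hb))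
    have h := (((Real.hasDerivAt_rpow_const (p := -α) (Or.inl hs0.ne')).comp s
      (hasDerivAt_neg s)).div_const (α * κ))
    refine h.congr_deriv ?_
    rw [abs_of_neg (neg_pos.1 hs0), show -α - 1 = -(1 + α) by ring, Real.rpow_neg hs0.le]
    field_simp
  rw [integral_eq_sub_of_hasDerivAt hderiv
    (by simpa using intervalIntegrable_one_div_rpow_abs_add (α := α) hκ le_rfl ha hb),
    sub_div]

lemma integral_one_div_rpow_abs_add_le (hκ : 0 < κ) (hα : α ≠ 0) (hε : 0 ≤ ε) {δ ξ : ℝ}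
    (hδξ : δ ≤ ξ) (hξ : ξ < 0) :
    ∫ s in δ..ξ, 1 / (κ * |s| ^ (1 + α) + ε) ≤ ((-ξ) ^ (-α) - (-δ) ^ (-α)) / (α * κ) := by
  have hδ : δ < 0 := hδξ.trans_lt hξ
  have hint₀ := intervalIntegrable_one_div_rpow_abs_add (α := α) hκ le_rfl hδ hξ
  simp only [add_zero] at hint₀
  rw [← integral_one_div_rpow_abs hκ hα hδ hξ]
  refine integral_mono_on hδξ (intervalIntegrable_one_div_rpow_abs_add hκ hε hδ hξ) hint₀
    fun s hs => ?_
  have := Real.rpow_pos_of_pos (abs_pos.2 (hs.2.trans_lt hξ).ne) (1 + α)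
  gcongr
  linarith

lemma one_div_sub_one_div_add_le {d₀ d ε : ℝ} (hd₀ : 0 < d₀) (hd : d₀ ≤ d) (hε : 0 ≤ ε) :
    1 / d - 1 / (d + ε) ≤ ε / d₀ ^ 2 := by
  have hd0 : 0 < d := hd₀.trans_le hd
  calc 1 / d - 1 / (d + ε) = ε / (d * (d + ε)) := by field_simp; ring
    _ ≤ ε / d₀ ^ 2 := by rw [sq]; gcongr; linarith

lemma sub_le_integral_one_div_rpow_abs_add (hκ : 0 < κ) (hα : 0 < α) (hε : 0 ≤ ε)
    {δ ξ c : ℝ} (hc : 0 < c) (hδξ : δ ≤ ξ) (hξc : ξ ≤ -c) :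
    ((-ξ) ^ (-α) - (-δ) ^ (-α)) / (α * κ) - (ξ - δ) * (ε / (κ * c ^ (1 + α)) ^ 2) ≤
      ∫ s in δ..ξ, 1 / (κ * |s| ^ (1 + α) + ε) := by
  have hξ : ξ < 0 := hξc.trans_lt (neg_neg_of_pos hc)
  have hδ : δ < 0 := hδξ.trans_lt hξ
  have hint₀ := intervalIntegrable_one_div_rpow_abs_add (α := α) hκ le_rfl hδ hξ
  simp only [add_zero] at hint₀
  rw [← integral_one_div_rpow_abs hκ hα.ne' hδ hξ, ← smul_eq_mul,
    ← intervalIntegral.integral_const, ← integral_sub hint₀ intervalIntegrable_const]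
  refine integral_mono_on hδξ (hint₀.sub intervalIntegrable_const)
    (intervalIntegrable_one_div_rpow_abs_add hκ hε hδ hξ) fun s hs => ?_
  have hcs : c ≤ |s| := by rw [abs_of_neg (hs.2.trans_lt hξ)]; linarith [hs.2]
  have := one_div_sub_one_div_add_le (d₀ := κ * c ^ (1 + α)) (d := κ * |s| ^ (1 + α))
    (by positivity) (by gcongr) hε
  linarith

lemma sub_le_integral_one_div_rpow_abs_add_of_le (hκ : 0 < κ) (hα : 0 < α) (hε : 0 ≤ ε)
    {δ ξ c : ℝ} (hc : 0 < c) (hδc : δ ≤ -c) (hcξ : -c ≤ ξ) (hξ : ξ < 0) :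
    (c ^ (-α) - (-δ) ^ (-α)) / (α * κ) - (-c - δ) * (ε / (κ * c ^ (1 + α)) ^ 2) ≤
      ∫ s in δ..ξ, 1 / (κ * |s| ^ (1 + α) + ε) := by
  have h := sub_le_integral_one_div_rpow_abs_add hκ hα hε hc hδc le_rfl
  rw [neg_neg] at h
  refine h.trans (integral_mono_interval le_rfl hδc hcξ (ae_of_all _ fun s => ?_)
    (intervalIntegrable_one_div_rpow_abs_add hκ hε (hδc.trans_lt (hcξ.trans_lt hξ)) hξ))
  have := Real.rpow_nonneg (abs_nonneg s) (1 + α)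
  positivity

lemma rpow_one_add_eq_rpow_rpow_neg {t : ℝ} (hα : α ≠ 0) (ht : 0 ≤ t) :
    t ^ (1 + α) = (t ^ (-α)) ^ (-((1 + α) / α)) := by
  rw [← Real.rpow_mul ht]
  congr 1
  field_simp

lemma rpow_neg_le_or_le_of_integral_eq (hκ : 0 < κ) (hα : 0 < α) (hε : 0 ≤ ε)
    {δ ξ c x : ℝ} (hc : 0 < c) (hδc : δ ≤ -c) (hδξ : δ ≤ ξ) (hξ : ξ < 0)
    (hρ : ∫ s in δ..ξ, 1 / (κ * |s| ^ (1 + α) + ε) = x) :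
    (-ξ) ^ (-α) ≤ α * κ * x + (-δ) ^ (-α) + ε * (α * κ * ((-δ) / (κ * c ^ (1 + α)) ^ 2)) ∨
      c ^ (-α) ≤ α * κ * x + (-δ) ^ (-α) + ε * (α * κ * ((-δ) / (κ * c ^ (1 + α)) ^ 2)) := by
  have hακ : 0 < α * κ := by positivity
  have herr : ∀ t ≤ 0, α * κ * ((t - δ) * (ε / (κ * c ^ (1 + α)) ^ 2)) ≤
      ε * (α * κ * ((-δ) / (κ * c ^ (1 + α)) ^ 2)) := fun t ht =>
    calc α * κ * ((t - δ) * (ε / (κ * c ^ (1 + α)) ^ 2))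
        ≤ α * κ * ((-δ) * (ε / (κ * c ^ (1 + α)) ^ 2)) := by gcongr; linarith
      _ = ε * (α * κ * ((-δ) / (κ * c ^ (1 + α)) ^ 2)) := by ring
  rcases le_or_gt ξ (-c) with hξc | hcξ
  · have h := sub_le_integral_one_div_rpow_abs_add hκ hα hε hc hδξ hξc
    rw [hρ, sub_le_iff_le_add, div_le_iff₀ hακ] at h
    exact Or.inl (by linarith [herr ξ hξ.le])
  · have h := sub_le_integral_one_div_rpow_abs_add_of_le hκ hα hε hc hδc hcξ.le hξ
    rw [hρ, sub_le_iff_le_add, div_le_iff₀ hακ] at h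
    exact Or.inr (by linarith [herr (-c) (neg_nonpos.2 hc.le)])

lemma exists_pos_le_rpow_neg_eq {α d T : ℝ} (hα : 0 < α) (hd : 0 < d) (hT : d ^ (-α) ≤ T) :
    ∃ c, 0 < c ∧ c ≤ d ∧ c ^ (-α) = T := by
  have hT0 : 0 < T := (Real.rpow_pos_of_pos hd _).trans_le hT
  have hcα : (T ^ (-α)⁻¹) ^ (-α) = T := Real.rpow_inv_rpow hT0.le (neg_ne_zero.2 hα.ne')
  refine ⟨T ^ (-α)⁻¹, by positivity, ?_, hcα⟩
  rwa [← Real.rpow_le_rpow_iff_of_neg hd (by positivity) (neg_lt_zero.2 hα), hcα]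

lemma abs_neg_mul_rpow_rpow_neg {y : ℝ} (hα : α ≠ 0) (hακ : 0 ≤ α * κ) (hy : 0 ≤ y) :
    |-((α * κ) ^ (-(1 / α)) * y ^ (-(1 / α)))| ^ (-α) = α * κ * y := by
  rw [abs_neg, abs_of_nonneg (by positivity), ← Real.mul_rpow hακ hy,
    show -(1 / α) = (-α)⁻¹ by ring, Real.rpow_inv_rpow (by positivity) (neg_ne_zero.2 hα)]

lemma abs_mul_rpow_neg_add_sub_lt_of_le_add {β A C a b η : ℝ} (hκ : 0 ≤ κ) (hβ : 0 ≤ β)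
    (hA : 0 < A) (hAa : A ≤ a) (hab : a ≤ b) (hbC : b ≤ a + C * ε) (hε : 0 < ε) (hεη : ε < η)
    (hCε : κ * (β * A ^ (-β - 1)) * (C * ε) ≤ η) :
    |κ * b ^ (-β) + ε - κ * a ^ (-β)| < η := by
  have hlip := mul_le_mul_of_nonneg_left (rpow_neg_sub_rpow_neg_le hβ hA hAa hab) hκ
  have hmono := mul_le_mul_of_nonneg_left
    (Real.rpow_le_rpow_of_nonpos (hA.trans_le hAa) hab (neg_nonpos.2 hβ)) hκ
  have hC := mul_le_mul_of_nonneg_left (sub_le_iff_le_add'.2 hbC)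
    (by positivity : 0 ≤ κ * (β * A ^ (-β - 1)))
  rw [abs_lt]
  constructor <;> linarith

lemma abs_mul_rpow_neg_add_sub_lt_of_le {β T a b η : ℝ} (hκ : 0 ≤ κ) (hβ : 0 ≤ β) (hT : 0 < T)
    (hTa : T ≤ a) (hab : a ≤ b) (hε : 0 ≤ ε) (hεη : ε < η) (hTη : κ * T ^ (-β) < η) :
    |κ * b ^ (-β) + ε - κ * a ^ (-β)| < η := by
  have ha : 0 < a := hT.trans_le hTa
  have hb : 0 ≤ κ * b ^ (-β) := mul_nonneg hκ (Real.rpow_nonneg (ha.le.trans hab) _)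
  have hTa' := mul_le_mul_of_nonneg_left
    (Real.rpow_le_rpow_of_nonpos hT hTa (neg_nonpos.2 hβ)) hκ
  have hab' := mul_le_mul_of_nonneg_left
    (Real.rpow_le_rpow_of_nonpos ha hab (neg_nonpos.2 hβ)) hκ
  rw [abs_lt]
  constructor <;> linarith

end

theorem stmt_8_general (κ α δ : ℝ) (hκ : 0 < κ) (hα : 0 < α) (hδ : δ < 0)
    (xhat : ℝ) (hxhat : xhat = (α * κ)⁻¹ * |δ| ^ (-α))
    (ℓ : ℝ → ℝ)
    (μ : ℝ → ℝ → ℝ)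
    (hμ0 : ∀ x₁, μ 0 x₁ = -((α * κ) ^ (-(1 / α)) * (x₁ + xhat) ^ (-(1 / α))))
    (hμ : ∀ ε, 0 < ε → ∀ x₁ ∈ Ico (0 : ℝ) (ℓ ε),
      μ ε x₁ ∈ Ico δ 0 ∧ (∫ s in δ..(μ ε x₁), 1 / (κ * |s| ^ (1 + α) + ε)) = x₁) :
    ∀ η > (0 : ℝ), ∃ ε₀ > (0 : ℝ), ∀ ε, 0 < ε → ε < ε₀ →
      ∀ x₁ ∈ Ico (0 : ℝ) (ℓ ε),
        |(κ * |μ ε x₁| ^ (1 + α) + ε) - κ * |μ 0 x₁| ^ (1 + α)| < η := by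
  intro η hη
  set A := (-δ) ^ (-α)
  set β := (1 + α) / α
  have hA : 0 < A := Real.rpow_pos_of_pos (neg_pos.2 hδ) _
  have hακ : 0 < α * κ := by positivity
  have hβ : 0 < β := by positivity
  have htail : Tendsto (fun T => κ * T ^ (-β)) atTop (nhds 0) := by
    simpa using (tendsto_rpow_neg_atTop hβ).const_mul κ
  obtain ⟨T, hAT, hTη⟩ : ∃ T, A ≤ T ∧ κ * T ^ (-β) < η :=
    ((eventually_ge_atTop A).and (htail.eventually_lt_const hη)).exists
  have hT : 0 < T := hA.trans_le hAT
  obtain ⟨c, hc, hcδ, hcα⟩ :=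
    exists_pos_le_rpow_neg_eq hα (neg_pos.2 hδ) (show A ≤ 2 * T by linarith)
  set K := α * κ * ((-δ) / (κ * c ^ (1 + α)) ^ 2)
  set L := κ * (β * A ^ (-β - 1))
  have hK : 0 < K := mul_pos hακ (div_pos (neg_pos.2 hδ) (by positivity))
  have hL : 0 < L := mul_pos hκ (mul_pos hβ (Real.rpow_pos_of_pos hA _))
  refine ⟨min η (min (T / K) (η / (L * K))),
    lt_min hη (lt_min (div_pos hT hK) (div_pos hη (mul_pos hL hK))), fun ε hε hεε₀ x hx => ?_⟩
  simp only [lt_min_iff, lt_div_iff₀ hK, lt_div_iff₀ (mul_pos hL hK)] at hεε₀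
  obtain ⟨hεη, hεT, hεL⟩ := hεε₀
  obtain ⟨⟨hδξ, hξ⟩, hρ⟩ := hμ ε hε x hx
  have hx0 : 0 ≤ x := hx.1
  have hμ0x : |μ 0 x| ^ (-α) = α * κ * x + A := by
    rw [hμ0 x, abs_neg_mul_rpow_rpow_neg hα.ne' hακ.le (by rw [hxhat]; positivity), hxhat,
      abs_of_neg hδ, mul_add, mul_inv_cancel_left₀ hακ.ne']
  have hab : α * κ * x + A ≤ (-μ ε x) ^ (-α) := by
    have h := integral_one_div_rpow_abs_add_le hκ hα.ne' hε.le hδξ hξ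
    rwa [hρ, le_div_iff₀ hακ, le_sub_iff_add_le, mul_comm x] at h
  rw [abs_of_neg hξ, rpow_one_add_eq_rpow_rpow_neg hα.ne' (neg_pos.2 hξ).le,
    rpow_one_add_eq_rpow_rpow_neg hα.ne' (abs_nonneg _), hμ0x]
  rcases rpow_neg_le_or_le_of_integral_eq hκ hα hε.le hc (le_neg.1 hcδ) hδξ hξ hρ
    with hclose | hfar
  · exact abs_mul_rpow_neg_add_sub_lt_of_le_add (C := K) hκ.le hβ.le hA
      (le_add_of_nonneg_left (by positivity)) hab (by linarith) hε hεη
      (hεL.le.trans_eq' (by simp only [L]; ring))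
  · exact abs_mul_rpow_neg_add_sub_lt_of_le hκ.le hβ.le hT (by linarith) hab hε.le hεη hTη

/-- sup_{x₁ ∈ [0, ℓ_ε)} |H_ε(μ_ε(x₁)) − H₀(μ₀(x₁))| → 0 as ε → 0⁺,
where H_ε(s) = κ|s|^{1+α} + ε and μ_ε is the inverse of
ρ_ε(ξ₁) = ∫_δ^{ξ₁} ds/H_ε(s) on [0, ℓ_ε). -/
theorem stmt_8 (κ α δ : ℝ) (hκ : 0 < κ) (hα : 0 < α) (hδ : δ < 0)
    (xhat : ℝ) (hxhat : xhat = (α * κ)⁻¹ * |δ| ^ (-α))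
    (ℓ : ℝ → ℝ)
    (hℓ : ∀ ε, 0 < ε → ℓ ε = ∫ s in δ..(0 : ℝ), 1 / (κ * |s| ^ (1 + α) + ε))
    (μ : ℝ → ℝ → ℝ)
    (hμ0 : ∀ x₁, μ 0 x₁ = -((α * κ) ^ (-(1 / α)) * (x₁ + xhat) ^ (-(1 / α))))
    (hμ : ∀ ε, 0 < ε → ∀ x₁ ∈ Ico (0 : ℝ) (ℓ ε),
      μ ε x₁ ∈ Ico δ 0 ∧ (∫ s in δ..(μ ε x₁), 1 / (κ * |s| ^ (1 + α) + ε)) = x₁) :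
    ∀ η > (0 : ℝ), ∃ ε₀ > (0 : ℝ), ∀ ε, 0 < ε → ε < ε₀ →
      ∀ x₁ ∈ Ico (0 : ℝ) (ℓ ε),
        |(κ * |μ ε x₁| ^ (1 + α) + ε) - κ * |μ 0 x₁| ^ (1 + α)| < η :=
  stmt_8_general κ α δ hκ hα hδ xhat hxhat ℓ μ hμ0 hμ
end

section
/- For every real number β there exists a constant C = C(β) > 0 such that for every real n ≥ 3 and every continuously differentiable function u on the closed rectangle [0, n] × [0, 1]: ∫_{(0,n)×(0,1)} u(x)² (1 + x₁)^{−2} dx ≤ C ( ∫_{(0,n)×(0,1)} |∇u(x)|² dx + ∫_{(0,2)×(0,1)} u(x)² (1 + x₁)^{β} dx ). The constant C is independent of n and u. -/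
/-!
On a horizontal slice `g = u(·, y)`, integrating `(-g² / (1 + t))' = g² / (1 + t)² - 2 g g' / (1 + t)`
over `[0, n]` and absorbing the cross term by `2ab ≤ a²/2 + 2b²` gives
`∫₀ⁿ g² / (1 + t)² ≤ 2 g(0)² + 4 ∫₀ⁿ g'²`, uniformly in `n`. The same computation with the weight
`1 - t` on `[0, 1]` bounds the boundary value: `g(0)² ≤ ∫₀¹ (2 g² + g'²)`. Integrating over the
slices (Fubini) yields `∫ u² (1 + x₁)⁻² ≤ 6 ∫ |∇u|² + 4 ∫_{(0,1)²} u²`. On `(0, 1)²` the weight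
`(1 + x₁)^β` is at least `min 1 (2^β)`, so the last term is at most a multiple of
`∫_{(0,2)×(0,1)} u² (1 + x₁)^β`.
-/

open Set MeasureTheory

section OneDimensional

open intervalIntegral

variable {g g' : ℝ → ℝ}

theorem integral_two_mul_mul_weight_add_sq_mul_deriv {w w' : ℝ → ℝ} {a b : ℝ} (hab : a ≤ b)
    (hg : ContinuousOn g (Icc a b)) (hg' : ContinuousOn g' (Icc a b))
    (hgd : ∀ t ∈ Ioo a b, HasDerivAt g (g' t) t)
    (hw : ContinuousOn w (Icc a b)) (hw' : ContinuousOn w' (Icc a b))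
    (hwd : ∀ t ∈ Ioo a b, HasDerivAt w (w' t) t) :
    ∫ t in a..b, (2 * g t * g' t * w t + g t ^ 2 * w' t) = g b ^ 2 * w b - g a ^ 2 * w a := by
  refine integral_eq_sub_of_hasDerivAt_of_le hab ((hg.pow 2).mul hw) (fun t ht => ?_) ?_
  · exact (((hgd t ht).pow 2).mul (hwd t ht)).congr_deriv (by norm_num)
  · exact ((((continuousOn_const.mul hg).mul hg').mul hw).add
      ((hg.pow 2).mul hw')).intervalIntegrable_of_Icc hab

theorem integral_sq_div_one_add_sq_le {b : ℝ} (hb : 0 ≤ b)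
    (hg : ContinuousOn g (Icc 0 b)) (hg' : ContinuousOn g' (Icc 0 b))
    (hgd : ∀ t ∈ Ioo 0 b, HasDerivAt g (g' t) t) :
    ∫ t in 0..b, g t ^ 2 / (1 + t) ^ 2 ≤ 2 * g 0 ^ 2 + 4 * ∫ t in 0..b, g' t ^ 2 := by
  have hne : ∀ t ∈ Icc (0 : ℝ) b, 1 + t ≠ 0 := fun t ht => by linarith [ht.1]
  have hw : ContinuousOn (fun t : ℝ => -(1 + t)⁻¹) (Icc 0 b) :=
    ((continuousOn_const.add continuousOn_id).inv₀ hne).neg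
  have hw' : ContinuousOn (fun t : ℝ => ((1 + t) ^ 2)⁻¹) (Icc 0 b) :=
    ((continuousOn_const.add continuousOn_id).pow 2).inv₀ fun t ht => pow_ne_zero 2 (hne t ht)
  have hwd : ∀ t ∈ Ioo (0 : ℝ) b, HasDerivAt (fun t : ℝ => -(1 + t)⁻¹) ((1 + t) ^ 2)⁻¹ t := by
    intro t ht
    exact (((hasDerivAt_id' t).const_add 1).inv (hne t (Ioo_subset_Icc_self ht))).neg.congr_deriv
      (by rw [neg_div, neg_neg, one_div])
  have hid := integral_two_mul_mul_weight_add_sq_mul_deriv hb hg hg' hgd hw hw' hwd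
  have hint : IntervalIntegrable (fun t => 2 * g t * g' t * -(1 + t)⁻¹ + g t ^ 2 * ((1 + t) ^ 2)⁻¹)
      volume 0 b :=
    ((((continuousOn_const.mul hg).mul hg').mul hw).add ((hg.pow 2).mul hw')).intervalIntegrable_of_Icc hb
  have hint' : IntervalIntegrable (fun t => g' t ^ 2) volume 0 b :=
    (hg'.pow 2).intervalIntegrable_of_Icc hb
  calc ∫ t in 0..b, g t ^ 2 / (1 + t) ^ 2
      ≤ ∫ t in 0..b, (2 * (2 * g t * g' t * -(1 + t)⁻¹ + g t ^ 2 * ((1 + t) ^ 2)⁻¹)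
          + 4 * g' t ^ 2) := by
        refine integral_mono_on hb ?_ ((hint.const_mul 2).add (hint'.const_mul 4)) fun t _ => ?_
        · exact ((hg.pow 2).div ((continuousOn_const.add continuousOn_id).pow 2)
            fun t ht => pow_ne_zero 2 (hne t ht)).intervalIntegrable_of_Icc hb
        · rw [div_eq_mul_inv, ← inv_pow]
          nlinarith [sq_nonneg (g t * (1 + t)⁻¹ - 2 * g' t)]
    _ = 2 * (g b ^ 2 * -(1 + b)⁻¹ - g 0 ^ 2 * -(1 + 0)⁻¹) + 4 * ∫ t in 0..b, g' t ^ 2 := by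
        rw [integral_add (hint.const_mul 2) (hint'.const_mul 4), intervalIntegral.integral_const_mul,
          intervalIntegral.integral_const_mul, hid]
    _ ≤ 2 * g 0 ^ 2 + 4 * ∫ t in 0..b, g' t ^ 2 := by
        have : 0 ≤ g b ^ 2 * (1 + b)⁻¹ := by positivity
        simp only [add_zero, inv_one, mul_neg, mul_one]
        linarith

theorem sq_le_integral_two_mul_sq_add_sq (hg : ContinuousOn g (Icc 0 1))
    (hg' : ContinuousOn g' (Icc 0 1)) (hgd : ∀ t ∈ Ioo 0 1, HasDerivAt g (g' t) t) :
    g 0 ^ 2 ≤ ∫ t in 0..1, (2 * g t ^ 2 + g' t ^ 2) := by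
  have hwd : ∀ t ∈ Ioo (0 : ℝ) 1, HasDerivAt (fun t : ℝ => 1 - t) (-1) t := fun t _ =>
    (hasDerivAt_id t).const_sub 1
  have hid := integral_two_mul_mul_weight_add_sq_mul_deriv zero_le_one hg hg' hgd
    (w := fun t => 1 - t) (continuousOn_const.sub continuousOn_id) continuousOn_const hwd
  calc g 0 ^ 2 = ∫ t in 0..1, -(2 * g t * g' t * (1 - t) + g t ^ 2 * -1) := by
        rw [intervalIntegral.integral_neg, hid]
        ring
    _ ≤ ∫ t in 0..1, (2 * g t ^ 2 + g' t ^ 2) := by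
        refine integral_mono_on zero_le_one ?_ ?_ fun t ht => ?_
        · exact ((((continuousOn_const.mul hg).mul hg').mul (continuousOn_const.sub continuousOn_id)).add
            ((hg.pow 2).mul continuousOn_const)).neg.intervalIntegrable_of_Icc zero_le_one
        · exact ((continuousOn_const.mul (hg.pow 2)).add (hg'.pow 2)).intervalIntegrable_of_Icc
            zero_le_one
        · nlinarith [sq_nonneg (g t + g' t * (1 - t)),
            mul_nonneg (mul_nonneg ht.1 (by linarith [ht.2] : (0 : ℝ) ≤ 2 - t)) (sq_nonneg (g' t))]


theorem setIntegral_sq_div_one_add_sq_le {b : ℝ} (hb : 1 ≤ b)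
    (hg : ContinuousOn g (Icc 0 b)) (hg' : ContinuousOn g' (Icc 0 b))
    (hgd : ∀ t ∈ Ioo 0 b, HasDerivAt g (g' t) t) :
    ∫ t in Ioo 0 b, g t ^ 2 / (1 + t) ^ 2 ≤
      6 * (∫ t in Ioo 0 b, g' t ^ 2) + 4 * ∫ t in Ioo 0 1, g t ^ 2 := by
  have hb₀ : (0 : ℝ) ≤ b := zero_le_one.trans hb
  have hsub : Icc (0 : ℝ) 1 ⊆ Icc 0 b := Icc_subset_Icc_right hb
  have hardy := integral_sq_div_one_add_sq_le hb₀ hg hg' hgd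
  have trace := sq_le_integral_two_mul_sq_add_sq (hg.mono hsub) (hg'.mono hsub)
    fun t ht => hgd t ⟨ht.1, ht.2.trans_le hb⟩
  have hmono : ∫ t in 0..1, g' t ^ 2 ≤ ∫ t in 0..b, g' t ^ 2 :=
    integral_mono_interval le_rfl zero_le_one hb (Filter.Eventually.of_forall fun t => sq_nonneg _)
      ((hg'.pow 2).intervalIntegrable_of_Icc hb₀)
  have hint : IntervalIntegrable (fun t => 2 * g t ^ 2) volume 0 1 :=
    (continuousOn_const.mul ((hg.mono hsub).pow 2)).intervalIntegrable_of_Icc zero_le_one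
  have hint' : IntervalIntegrable (fun t => g' t ^ 2) volume 0 1 :=
    ((hg'.mono hsub).pow 2).intervalIntegrable_of_Icc zero_le_one
  rw [integral_add hint hint',
    intervalIntegral.integral_const_mul] at trace
  rw [← integral_Ioc_eq_integral_Ioo, ← integral_Ioc_eq_integral_Ioo, ← integral_Ioc_eq_integral_Ioo,
    ← integral_of_le hb₀, ← integral_of_le hb₀, ← integral_of_le zero_le_one]
  linarith

end OneDimensional

section Fubini

variable {α β E : Type*} [MeasurableSpace α] [MeasurableSpace β] {μ : Measure α} {ν : Measure β}
  [SFinite μ] [SFinite ν] [NormedAddCommGroup E] [NormedSpace ℝ E] {s s' : Set α} {t : Set β}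

theorem setIntegral_prod_symm (f : α × β → E) (hf : IntegrableOn f (s ×ˢ t) (μ.prod ν)) :
    ∫ z in s ×ˢ t, f z ∂μ.prod ν = ∫ y in t, ∫ x in s, f (x, y) ∂μ ∂ν := by
  rw [IntegrableOn, ← Measure.prod_restrict] at hf
  rw [← Measure.prod_restrict]
  exact integral_prod_symm f hf

theorem MeasureTheory.IntegrableOn.setIntegral_prod_right {f : α × β → E}
    (hf : IntegrableOn f (s ×ˢ t) (μ.prod ν)) :
    IntegrableOn (fun y => ∫ x in s, f (x, y) ∂μ) t ν := by
  rw [IntegrableOn, ← Measure.prod_restrict] at hf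
  exact hf.integral_prod_right

theorem setIntegral_prod_le_of_forall_mem {f g h : α × β → ℝ}
    (hf : IntegrableOn f (s ×ˢ t) (μ.prod ν)) (hg : IntegrableOn g (s ×ˢ t) (μ.prod ν))
    (hh : IntegrableOn h (s' ×ˢ t) (μ.prod ν)) (ht : MeasurableSet t)
    (hslice : ∀ y ∈ t, ∫ x in s, f (x, y) ∂μ ≤ ∫ x in s, g (x, y) ∂μ + ∫ x in s', h (x, y) ∂μ) :
    ∫ z in s ×ˢ t, f z ∂μ.prod ν ≤ ∫ z in s ×ˢ t, g z ∂μ.prod ν + ∫ z in s' ×ˢ t, h z ∂μ.prod ν := by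
  rw [setIntegral_prod_symm f hf, setIntegral_prod_symm g hg, setIntegral_prod_symm h hh,
    ← integral_add hg.setIntegral_prod_right hh.setIntegral_prod_right]
  exact setIntegral_mono_on hf.setIntegral_prod_right
    (hg.setIntegral_prod_right.add hh.setIntegral_prod_right) ht hslice

end Fubini

theorem ContinuousOn.integrableOn_Ioo_prod_Ioo {E : Type*} [NormedAddCommGroup E]
    {f : ℝ × ℝ → E} {a b c d : ℝ} (hf : ContinuousOn f (Icc a b ×ˢ Icc c d)) :
    IntegrableOn f (Ioo a b ×ˢ Ioo c d) :=
  (hf.integrableOn_compact (isCompact_Icc.prod isCompact_Icc)).mono_set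
    (prod_mono Ioo_subset_Icc_self Ioo_subset_Icc_self)

theorem ContDiffOn.continuousOn_fderivWithin_Icc_prod_Icc_apply {u : ℝ × ℝ → ℝ} {a b c d : ℝ}
    (hab : a < b) (hcd : c < d) (hu : ContDiffOn ℝ 1 u (Icc a b ×ˢ Icc c d)) (v : ℝ × ℝ) :
    ContinuousOn (fun x => fderivWithin ℝ u (Icc a b ×ˢ Icc c d) x v) (Icc a b ×ˢ Icc c d) :=
  (ContinuousLinearMap.apply ℝ ℝ v).continuous.comp_continuousOn
    (hu.continuousOn_fderivWithin ((uniqueDiffOn_Icc hab).prod (uniqueDiffOn_Icc hcd)) le_rfl)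

theorem setIntegral_sq_div_one_add_sq_le_partial_fst {u : ℝ × ℝ → ℝ} {n c d : ℝ} (hn : 1 ≤ n)
    (hcd : c < d) (hu : ContDiffOn ℝ 1 u (Icc 0 n ×ˢ Icc c d)) :
    ∫ x in Ioo 0 n ×ˢ Ioo c d, u x ^ 2 / (1 + x.1) ^ 2 ≤
      (∫ x in Ioo 0 n ×ˢ Ioo c d, 6 * fderivWithin ℝ u (Icc 0 n ×ˢ Icc c d) x (1, 0) ^ 2) +
        ∫ x in Ioo 0 1 ×ˢ Ioo c d, 4 * u x ^ 2 := by
  set S := Icc 0 n ×ˢ Icc c d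
  have hcont : ContinuousOn u S := hu.continuousOn
  have hd₁ := hu.continuousOn_fderivWithin_Icc_prod_Icc_apply (by linarith) hcd (1, 0)
  have hne : ∀ x ∈ S, (1 + x.1) ^ 2 ≠ 0 := fun x hx => by
    have : (0 : ℝ) ≤ x.1 := hx.1.1
    positivity
  refine setIntegral_prod_le_of_forall_mem ?_ ?_ ?_ measurableSet_Ioo fun y hy => ?_
  · exact ((hcont.pow 2).div ((continuous_const.add continuous_fst).pow 2).continuousOn
      hne).integrableOn_Ioo_prod_Ioo
  · exact (continuousOn_const.mul (hd₁.pow 2)).integrableOn_Ioo_prod_Ioo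
  · exact (continuousOn_const.mul
      ((hcont.mono (prod_mono (Icc_subset_Icc_right hn) Subset.rfl)).pow 2)).integrableOn_Ioo_prod_Ioo
  have hmaps : MapsTo (fun s : ℝ => (s, y)) (Icc 0 n) S := fun s hs => ⟨hs, Ioo_subset_Icc_self hy⟩
  have hline : ContinuousOn (fun s : ℝ => (s, y)) (Icc 0 n) :=
    (continuous_id.prodMk continuous_const).continuousOn
  have hgd : ∀ s ∈ Ioo 0 n,
      HasDerivAt (fun t => u (t, y)) (fderivWithin ℝ u S (s, y) (1, 0)) s := fun s hs =>
    ((hu.differentiableOn one_ne_zero _ (hmaps (Ioo_subset_Icc_self hs))).hasFDerivWithinAt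
      |>.comp_hasDerivWithinAt s ((hasDerivWithinAt_id s _).prodMk (hasDerivWithinAt_const s _ y))
        hmaps).hasDerivAt (Icc_mem_nhds hs.1 hs.2)
  rw [integral_const_mul, integral_const_mul]
  exact setIntegral_sq_div_one_add_sq_le hn (hcont.comp hline hmaps) (hd₁.comp hline hmaps) hgd

theorem setIntegral_sq_div_one_add_sq_le_gradient {u : ℝ × ℝ → ℝ} {n c d : ℝ} (hn : 1 ≤ n)
    (hcd : c < d) (hu : ContDiffOn ℝ 1 u (Icc 0 n ×ˢ Icc c d)) :
    ∫ x in Ioo 0 n ×ˢ Ioo c d, u x ^ 2 / (1 + x.1) ^ 2 ≤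
      6 * (∫ x in Ioo 0 n ×ˢ Ioo c d, (fderivWithin ℝ u (Icc 0 n ×ˢ Icc c d) x (1, 0) ^ 2 +
        fderivWithin ℝ u (Icc 0 n ×ˢ Icc c d) x (0, 1) ^ 2)) +
        4 * ∫ x in Ioo 0 1 ×ˢ Ioo c d, u x ^ 2 := by
  have hd (v : ℝ × ℝ) : IntegrableOn (fun x => fderivWithin ℝ u (Icc 0 n ×ˢ Icc c d) x v ^ 2)
      (Ioo 0 n ×ˢ Ioo c d) :=
    ((hu.continuousOn_fderivWithin_Icc_prod_Icc_apply (by linarith) hcd v).pow 2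
      ).integrableOn_Ioo_prod_Ioo
  have hpartial := setIntegral_sq_div_one_add_sq_le_partial_fst hn hcd hu
  rw [integral_const_mul, integral_const_mul] at hpartial
  have hgrad := setIntegral_mono_on (hd (1, 0)) ((hd (1, 0)).add (hd (0, 1)))
    (measurableSet_Ioo.prod measurableSet_Ioo) fun x _ => le_add_of_nonneg_right (sq_nonneg _)
  simp only [Pi.add_apply] at hgrad
  linarith

theorem min_one_rpow_le_rpow {a x β : ℝ} (hx : 1 ≤ x) (hxa : x ≤ a) : min 1 (a ^ β) ≤ x ^ β := by
  rcases le_or_gt 0 β with hβ | hβ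
  · exact (min_le_left _ _).trans (Real.one_le_rpow hx hβ)
  · exact (min_le_right _ _).trans (Real.rpow_le_rpow_of_nonpos (by linarith) hxa hβ.le)

theorem min_one_rpow_mul_setIntegral_sq_le {u : ℝ × ℝ → ℝ} {c d : ℝ} (β : ℝ)
    (hu : ContinuousOn u (Icc 0 2 ×ˢ Icc c d)) :
    min 1 (2 ^ β) * ∫ x in Ioo 0 1 ×ˢ Ioo c d, u x ^ 2 ≤
      ∫ x in Ioo 0 2 ×ˢ Ioo c d, u x ^ 2 * (1 + x.1) ^ β := by
  have hsub : Ioo (0 : ℝ) 1 ×ˢ Ioo c d ⊆ Ioo 0 2 ×ˢ Ioo c d :=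
    prod_mono (Ioo_subset_Ioo_right one_le_two) Subset.rfl
  have hpos : ∀ x ∈ Icc (0 : ℝ) 2 ×ˢ Icc c d, 0 < 1 + x.1 := fun x hx => by linarith [hx.1.1]
  have hint : IntegrableOn (fun x : ℝ × ℝ => u x ^ 2 * (1 + x.1) ^ β) (Ioo 0 2 ×ˢ Ioo c d) :=
    ((hu.pow 2).mul ((continuous_const.add continuous_fst).continuousOn.rpow_const
      fun x hx => Or.inl (hpos x hx).ne')).integrableOn_Ioo_prod_Ioo
  calc min 1 (2 ^ β) * ∫ x in Ioo 0 1 ×ˢ Ioo c d, u x ^ 2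
      = ∫ x in Ioo 0 1 ×ˢ Ioo c d, min 1 (2 ^ β) * u x ^ 2 := (integral_const_mul _ _).symm
    _ ≤ ∫ x in Ioo 0 1 ×ˢ Ioo c d, u x ^ 2 * (1 + x.1) ^ β := by
        refine setIntegral_mono_on ?_ (hint.mono_set hsub) (measurableSet_Ioo.prod measurableSet_Ioo)
          fun x hx => ?_
        · exact ((continuousOn_const.mul (hu.pow 2)).integrableOn_Ioo_prod_Ioo).mono_set hsub
        · rw [mul_comm]
          exact mul_le_mul_of_nonneg_left
            (min_one_rpow_le_rpow (by linarith [hx.1.1]) (by linarith [hx.1.2])) (sq_nonneg _)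
    _ ≤ ∫ x in Ioo 0 2 ×ˢ Ioo c d, u x ^ 2 * (1 + x.1) ^ β :=
        setIntegral_mono_set hint
          (ae_restrict_of_forall_mem (measurableSet_Ioo.prod measurableSet_Ioo) fun x hx =>
            mul_nonneg (sq_nonneg _) (Real.rpow_nonneg (by linarith [hx.1.1]) _))
          hsub.eventuallyLE

/-- for every β ∈ ℝ there is C = C(β) > 0 (independent of n and u) such
that for every real n ≥ 3 and every u ∈ C¹([0,n]×[0,1]):
∫_{(0,n)×(0,1)} u² (1+x₁)^{−2} ≤ C (∫_{(0,n)×(0,1)} |∇u|² + ∫_{(0,2)×(0,1)} u² (1+x₁)^β). -/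
theorem stmt_11 (β : ℝ) :
    ∃ C > (0 : ℝ), ∀ n : ℝ, 3 ≤ n → ∀ u : ℝ × ℝ → ℝ,
      ContDiffOn ℝ 1 u (Icc (0 : ℝ) n ×ˢ Icc (0 : ℝ) 1) →
      (∫ x in Ioo (0 : ℝ) n ×ˢ Ioo (0 : ℝ) 1, u x ^ 2 * (1 + x.1) ^ (-2 : ℝ)) ≤
        C * ((∫ x in Ioo (0 : ℝ) n ×ˢ Ioo (0 : ℝ) 1,
              (fderivWithin ℝ u (Icc (0 : ℝ) n ×ˢ Icc (0 : ℝ) 1) x (1, 0)) ^ 2 +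
              (fderivWithin ℝ u (Icc (0 : ℝ) n ×ˢ Icc (0 : ℝ) 1) x (0, 1)) ^ 2) +
            ∫ x in Ioo (0 : ℝ) 2 ×ˢ Ioo (0 : ℝ) 1, u x ^ 2 * (1 + x.1) ^ β) := by
  set m := min 1 ((2 : ℝ) ^ β)
  have hm : 0 < m := lt_min one_pos (Real.rpow_pos_of_pos two_pos β)
  refine ⟨6 + 4 / m, by positivity, fun n hn u hu => ?_⟩
  have hstrip := setIntegral_sq_div_one_add_sq_le_gradient (by linarith) zero_lt_one hu
  have hlocal := min_one_rpow_mul_setIntegral_sq_le β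
    (hu.continuousOn.mono (prod_mono (Icc_subset_Icc_right (by linarith)) Subset.rfl))
  have hgrad₀ : 0 ≤ ∫ x in Ioo (0 : ℝ) n ×ˢ Ioo (0 : ℝ) 1,
      (fderivWithin ℝ u (Icc 0 n ×ˢ Icc 0 1) x (1, 0) ^ 2 +
        fderivWithin ℝ u (Icc 0 n ×ˢ Icc 0 1) x (0, 1) ^ 2) :=
    setIntegral_nonneg (measurableSet_Ioo.prod measurableSet_Ioo) fun x _ => by positivity
  have hU : 4 * ∫ x in Ioo (0 : ℝ) 1 ×ˢ Ioo (0 : ℝ) 1, u x ^ 2 ≤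
      4 / m * ∫ x in Ioo (0 : ℝ) 2 ×ˢ Ioo (0 : ℝ) 1, u x ^ 2 * (1 + x.1) ^ β := by
    rw [div_mul_eq_mul_div, le_div_iff₀ hm]
    linarith
  have hweight₀ : 0 ≤ ∫ x in Ioo (0 : ℝ) 2 ×ˢ Ioo (0 : ℝ) 1, u x ^ 2 * (1 + x.1) ^ β :=
    setIntegral_nonneg (measurableSet_Ioo.prod measurableSet_Ioo) fun x hx =>
      mul_nonneg (sq_nonneg _) (Real.rpow_nonneg (by linarith [hx.1.1]) _)
  rw [setIntegral_congr_fun (measurableSet_Ioo.prod measurableSet_Ioo) fun x hx => by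
    rw [Real.rpow_neg (by linarith [hx.1.1]), Real.rpow_two, ← div_eq_mul_inv]]
  nlinarith [mul_nonneg (div_pos four_pos hm).le hgrad₀]
end

section
/- There exists a constant C > 0 such that for every continuously differentiable, compactly supported function u : ℝ² → ℝ: ∫₀^{+∞} u(x₁, 1)² (1 + x₁)^{−2} dx₁ ≤ C ( ∫_{R₀} |∇u(x)|² dx + ∫_{R₀} u(x)² (1 + x₁)^{−2} dx ), where R₀ = (0, +∞) × (0, 1). -/
/-!
For fixed `x₁`, the fundamental theorem of calculus for `t ↦ t u(x₁,t)²` on `[0,1]` gives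
`u(x₁,1)² = ∫₀¹ (u² + 2t u ∂₂u) dt`. Multiplying by `w = (1+x₁)⁻² ∈ [0,1]` and using
`2t w u ∂₂u ≤ (∂₂u)² + t²w²u² ≤ (∂₂u)² + w u²` bounds `w u(x₁,1)²` by
`2 ∫₀¹ ((∂₂u)² + w u²) dt`.
Integrating over `x₁ > 0` (Fubini) yields the inequality with `C = 2`.
-/

open Set MeasureTheory

theorem Continuous.integrable_sq_of_hasCompactSupport {X : Type*} [TopologicalSpace X]
    [MeasurableSpace X] [OpensMeasurableSpace X] {μ : Measure X} [IsFiniteMeasureOnCompacts μ]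
    {f : X → ℝ} (hf : Continuous f) (hsupp : HasCompactSupport f) :
    Integrable (fun x => f x ^ 2) μ :=
  (hf.pow 2).integrable_of_hasCompactSupport (by simpa [sq] using hsupp.mul_left)

theorem ContDiff.integrable_fderiv_apply_sq {E : Type*} [NormedAddCommGroup E]
    [NormedSpace ℝ E] [MeasurableSpace E] [OpensMeasurableSpace E] {μ : Measure E}
    [IsFiniteMeasureOnCompacts μ] {u : E → ℝ} (hu : ContDiff ℝ 1 u)
    (hsupp : HasCompactSupport u) (v : E) :
    Integrable (fun x => fderiv ℝ u x v ^ 2) μ :=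
  ((hu.continuous_fderiv one_ne_zero).clm_apply continuous_const).integrable_sq_of_hasCompactSupport
    (hsupp.fderiv_apply ℝ v)

theorem sq_mul_le_two_mul_integral_deriv_sq_add {f f' : ℝ → ℝ} {w : ℝ}
    (hf : ∀ t ∈ Icc (0 : ℝ) 1, HasDerivAt f (f' t) t) (hf' : ContinuousOn f' (Icc 0 1))
    (hw₀ : 0 ≤ w) (hw₁ : w ≤ 1) :
    f 1 ^ 2 * w ≤ 2 * ∫ t in Ioo (0 : ℝ) 1, (f' t ^ 2 + f t ^ 2 * w) := by
  have hf_cont : ContinuousOn f (Icc 0 1) := fun t ht =>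
    (hf t ht).continuousAt.continuousWithinAt
  rw [← uIcc_of_le zero_le_one] at hf hf' hf_cont
  have hftc : ∫ t in (0 : ℝ)..1, (f t ^ 2 + 2 * t * f t * f' t) = f 1 ^ 2 := by
    have hderiv : ∀ t ∈ uIcc (0 : ℝ) 1,
        HasDerivAt (fun s => s * f s ^ 2) (f t ^ 2 + 2 * t * f t * f' t) t := fun t ht =>
      ((hasDerivAt_id t).mul ((hf t ht).pow 2)).congr_deriv (by simp; ring)
    rw [intervalIntegral.integral_eq_sub_of_hasDerivAt hderiv
      (ContinuousOn.intervalIntegrable (by fun_prop))]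
    simp
  calc f 1 ^ 2 * w = ∫ t in (0 : ℝ)..1, (f t ^ 2 + 2 * t * f t * f' t) * w := by
        rw [intervalIntegral.integral_mul_const, hftc]
    _ ≤ ∫ t in (0 : ℝ)..1, 2 * (f' t ^ 2 + f t ^ 2 * w) := by
        refine intervalIntegral.integral_mono_on zero_le_one
          (ContinuousOn.intervalIntegrable (by fun_prop))
          (ContinuousOn.intervalIntegrable (by fun_prop)) fun t ht => ?_
        have ht : t ^ 2 * w ≤ 1 := by nlinarith [ht.1, ht.2]
        nlinarith [sq_nonneg (f' t - t * w * f t),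
          mul_le_mul_of_nonneg_left ht (mul_nonneg hw₀ (sq_nonneg (f t)))]
    _ = 2 * ∫ t in Ioo (0 : ℝ) 1, (f' t ^ 2 + f t ^ 2 * w) := by
        rw [intervalIntegral.integral_const_mul, intervalIntegral.integral_of_le zero_le_one,
          integral_Ioc_eq_integral_Ioo]

theorem DifferentiableAt.hasDerivAt_comp_prodMk_right {u : ℝ × ℝ → ℝ} {x₁ t : ℝ}
    (hu : DifferentiableAt ℝ u (x₁, t)) :
    HasDerivAt (fun s => u (x₁, s)) (fderiv ℝ u (x₁, t) (0, 1)) t :=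
  hu.hasFDerivAt.comp_hasDerivAt t ((hasDerivAt_const t x₁).prodMk (hasDerivAt_id t))

theorem one_add_rpow_neg_two_mem_Icc {x : ℝ} (hx : 0 ≤ x) : (1 + x) ^ (-2 : ℝ) ∈ Icc 0 1 :=
  ⟨Real.rpow_nonneg (by linarith) _,
    Real.rpow_le_one_of_one_le_of_nonpos (by linarith) (by norm_num)⟩

theorem MeasureTheory.IntegrableOn.mul_one_add_fst_rpow_neg_two {g : ℝ × ℝ → ℝ}
    {s : Set (ℝ × ℝ)} (hs : MeasurableSet s) (hs₀ : ∀ x ∈ s, 0 ≤ x.1)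
    (hg : IntegrableOn g s) :
    IntegrableOn (fun x => g x * (1 + x.1) ^ (-2 : ℝ)) s := by
  refine hg.mul_bdd (c := 1) (Measurable.aestronglyMeasurable (by fun_prop))
    ((ae_restrict_iff' hs).2 (.of_forall fun x hx => ?_))
  obtain ⟨hw₀, hw₁⟩ := one_add_rpow_neg_two_mem_Icc (hs₀ x hx)
  rwa [Real.norm_of_nonneg hw₀]

theorem sq_mul_rpow_neg_two_le_two_mul_integral_slice {u : ℝ × ℝ → ℝ}
    (hu : ContDiff ℝ 1 u) {x₁ : ℝ} (hx₁ : 0 ≤ x₁) :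
    u (x₁, 1) ^ 2 * (1 + x₁) ^ (-2 : ℝ) ≤
      2 * ∫ t in Ioo (0 : ℝ) 1,
        (fderiv ℝ u (x₁, t) (0, 1) ^ 2 + u (x₁, t) ^ 2 * (1 + x₁) ^ (-2 : ℝ)) :=
  sq_mul_le_two_mul_integral_deriv_sq_add
    (fun t _ => (hu.differentiable one_ne_zero (x₁, t)).hasDerivAt_comp_prodMk_right)
    (((hu.continuous_fderiv one_ne_zero).comp (.prodMk_right x₁)).clm_apply
      continuous_const).continuousOn
    (one_add_rpow_neg_two_mem_Icc hx₁).1 (one_add_rpow_neg_two_mem_Icc hx₁).2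

theorem integral_upper_side_le_two_mul_integral_strip {u : ℝ × ℝ → ℝ}
    (hu : ContDiff ℝ 1 u)
    (hint : IntegrableOn (fun x => fderiv ℝ u x (0, 1) ^ 2 + u x ^ 2 * (1 + x.1) ^ (-2 : ℝ))
      (Ioi 0 ×ˢ Ioo 0 1)) :
    ∫ x₁ in Ioi (0 : ℝ), u (x₁, 1) ^ 2 * (1 + x₁) ^ (-2 : ℝ) ≤
      2 * ∫ x in Ioi (0 : ℝ) ×ˢ Ioo (0 : ℝ) 1,
        (fderiv ℝ u x (0, 1) ^ 2 + u x ^ 2 * (1 + x.1) ^ (-2 : ℝ)) := by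
  have hint_prod := hint
  rw [IntegrableOn, Measure.volume_eq_prod, ← Measure.prod_restrict] at hint_prod
  rw [Measure.volume_eq_prod, setIntegral_prod _ hint, ← integral_const_mul]
  exact integral_mono_of_nonneg
    ((ae_restrict_iff' measurableSet_Ioi).2 <| .of_forall fun x₁ hx₁ =>
      mul_nonneg (sq_nonneg _) (one_add_rpow_neg_two_mem_Icc (le_of_lt hx₁)).1)
    (hint_prod.integral_prod_left.const_mul 2)
    ((ae_restrict_iff' measurableSet_Ioi).2 <| .of_forall fun x₁ hx₁ =>
      sq_mul_rpow_neg_two_le_two_mul_integral_slice hu (le_of_lt hx₁))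

/-- weighted trace inequality on the upper side of the semi-infinite
strip R₀ = (0,∞) × (0,1): there is C > 0 such that for every C¹ compactly supported
u : ℝ² → ℝ,
∫₀^∞ u(x₁,1)² (1+x₁)^{−2} dx₁ ≤ C (∫_{R₀} |∇u|² dx + ∫_{R₀} u² (1+x₁)^{−2} dx). -/
theorem stmt_13 :
    ∃ C > (0 : ℝ), ∀ u : ℝ × ℝ → ℝ, ContDiff ℝ 1 u → HasCompactSupport u →
      (∫ x₁ in Ioi (0 : ℝ), u (x₁, 1) ^ 2 * (1 + x₁) ^ (-2 : ℝ)) ≤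
        C * ((∫ x in Ioi (0 : ℝ) ×ˢ Ioo (0 : ℝ) 1,
                (fderiv ℝ u x (1, 0)) ^ 2 + (fderiv ℝ u x (0, 1)) ^ 2) +
             ∫ x in Ioi (0 : ℝ) ×ˢ Ioo (0 : ℝ) 1, u x ^ 2 * (1 + x.1) ^ (-2 : ℝ)) := by
  refine ⟨2, two_pos, fun u hu hsupp => ?_⟩
  have h₁ := (hu.integrable_fderiv_apply_sq hsupp (1, 0) (μ := volume)).integrableOn
    (s := Ioi 0 ×ˢ Ioo 0 1)
  have h₂ := (hu.integrable_fderiv_apply_sq hsupp (0, 1) (μ := volume)).integrableOn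
    (s := Ioi 0 ×ˢ Ioo 0 1)
  have hw : IntegrableOn (fun x => u x ^ 2 * (1 + x.1) ^ (-2 : ℝ)) (Ioi 0 ×ˢ Ioo 0 1) :=
    .mul_one_add_fst_rpow_neg_two (measurableSet_Ioi.prod measurableSet_Ioo)
      (fun x hx => hx.1.le) (hu.continuous.integrable_sq_of_hasCompactSupport hsupp).integrableOn
  have hgrad : IntegrableOn (fun x => fderiv ℝ u x (1, 0) ^ 2 + fderiv ℝ u x (0, 1) ^ 2)
      (Ioi 0 ×ˢ Ioo 0 1) :=
    h₁.add h₂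
  calc _ ≤ 2 * ∫ x in Ioi (0 : ℝ) ×ˢ Ioo (0 : ℝ) 1,
          (fderiv ℝ u x (0, 1) ^ 2 + u x ^ 2 * (1 + x.1) ^ (-2 : ℝ)) :=
        integral_upper_side_le_two_mul_integral_strip hu (h₂.add hw)
    _ ≤ 2 * ∫ x in Ioi (0 : ℝ) ×ˢ Ioo (0 : ℝ) 1,
          ((fderiv ℝ u x (1, 0) ^ 2 + fderiv ℝ u x (0, 1) ^ 2) +
            u x ^ 2 * (1 + x.1) ^ (-2 : ℝ)) := by
        gcongr 2 * ?_
        exact integral_mono (h₂.add hw) (hgrad.add hw) fun x => by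
          dsimp only; linarith [sq_nonneg (fderiv ℝ u x (1, 0))]
    _ = _ := by rw [integral_add hgrad hw]
end
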